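/- arXiv:1210.5993 — 4 statements merged into one kernel-verified Lean document; each statement's English description precedes it below -/
import Mathlib

section
/- Let S ⊆ T be a tree extension, M a representation of T over a field K, and B an ordered basis of M that is ordered above S (so in particular, for every arrow α : p → q of T−S, M_α maps B_p bijectively onto B_q). Let β ⊆ B and β_S = β ∩ B_S. Then the Schubert cell C_β^M is empty if and only if C_{β_S}^{M_S} is empty or there exists an arrow α : p → q in T−S with M_α(β_p) ⊄ β_q. -/
/-!
A point of `C_β^M` is, vertex by vertex, the row space of a reduced echelon matrix with pivot
columns `β_p`. An arrow of `T − S` has the identity matrix, so it acts by relabelling coordinates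
along an order isomorphism `B_p ≃o B_q`; it can map one cell subspace into another only if it sends
pivots to pivots, because the leading entry of a transported row is still a leading entry. Together
with restriction to `S`, this shows that a nonempty `C_β^M` forces both conditions.

Conversely, in a tree extension every vertex outside `S` has a parent arrow leading to a vertex
closer to `S`, and counting shows that these are all the arrows of `T − S`. Starting from a point of
`C_{β_S}^{M_S}` and treating the vertices in order of their distance to `S`, one transports the
echelon rows across each parent arrow: backwards by pulling them back, forwards by pushing them and
clearing the entries in the new pivot columns.
-/

open scoped Classical

noncomputable section

namespace QGr

/-- A representation of the quiver with vertex set `V0` and arrow set `A`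
(source and target maps are part of the data), given in coordinates with respect to
an ordered basis `B`: the basis element `b : B` sits at the vertex `vtx b`, the space
at the vertex `p` is `{b : B // vtx b = p} → K`, and `mmap a` is the map attached to
the arrow `a`. -/
structure Rep (K : Type) [Field K] (V0 A B : Type) where
  src : A → V0
  tgt : A → V0
  vtx : B → V0
  mmap : ∀ a : A, ({b : B // vtx b = src a} → K) → ({b : B // vtx b = tgt a} → K)

namespace Rep

variable {K : Type} [Field K] {V0 A B : Type}

/-- A collection of subspaces, one at each vertex. -/
def SubRep (R : Rep K V0 A B) : Type :=
  ∀ p : V0, Submodule K ({b : B // R.vtx b = p} → K)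

/-- The collection `W` is a subrepresentation. -/
def IsSubrep (R : Rep K V0 A B) (W : R.SubRep) : Prop :=
  ∀ a : A, ∀ x ∈ W (R.src a), R.mmap a x ∈ W (R.tgt a)

/-- All structure maps are `K`-linear. -/
def Linear (R : Rep K V0 A B) : Prop := ∀ a : A, IsLinearMap K (R.mmap a)

/-- Membership in the Schubert cell attached to `β ⊆ B`: each `W p` is spanned by vectors
`v b₀ = b₀ + ∑ λ_{b',b₀} b'` (`b₀ ∈ β ∩ B_p`), the sum over `b' < b₀` with `b' ∉ β`. -/
def InCell [LinearOrder B] (R : Rep K V0 A B) (β : Finset B) (W : R.SubRep) : Prop :=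
  ∀ p : V0, ∃ v : {b : B // b ∈ β ∧ R.vtx b = p} → ({b : B // R.vtx b = p} → K),
    (∀ b0, v b0 ⟨b0.val, b0.prop.2⟩ = 1) ∧
    (∀ b0 b1, b1.val ≠ b0.val → ¬(b1.val < b0.val ∧ b1.val ∉ β) → v b0 b1 = 0) ∧
    W p = Submodule.span K (Set.range v)

/-- The Schubert cell `C_β^M`. -/
def Cell [LinearOrder B] (R : Rep K V0 A B) (β : Finset B) : Set R.SubRep :=
  {W | R.IsSubrep W ∧
    (∀ p : V0, Module.finrank K (W p) = (β.filter fun b => R.vtx b = p).card) ∧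
    R.InCell β W}

/-- The quiver Grassmannian `Gr_e(M)`. -/
def Gr (R : Rep K V0 A B) (e : V0 → ℕ) : Set R.SubRep :=
  {W | R.IsSubrep W ∧ ∀ p : V0, Module.finrank K (W p) = e p}

/-- Collections of subspaces indexed by the vertices in `S0`. -/
def SubRepOn (R : Rep K V0 A B) (S0 : Set V0) : Type :=
  ∀ p : {p : V0 // p ∈ S0}, Submodule K ({b : B // R.vtx b = ↑p} → K)

/-- Subrepresentation condition over the subquiver `(S0, S1)`. -/
def IsSubrepOn (R : Rep K V0 A B) (S0 : Set V0) (S1 : Set A) (W : R.SubRepOn S0) : Prop :=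
  ∀ a : A, a ∈ S1 → ∀ (h1 : R.src a ∈ S0) (h2 : R.tgt a ∈ S0),
    ∀ x ∈ W ⟨R.src a, h1⟩, R.mmap a x ∈ W ⟨R.tgt a, h2⟩

/-- Cell membership over the vertices in `S0`. -/
def InCellOn [LinearOrder B] (R : Rep K V0 A B) (S0 : Set V0) (β : Finset B)
    (W : R.SubRepOn S0) : Prop :=
  ∀ p : {p : V0 // p ∈ S0},
    ∃ v : {b : B // b ∈ β ∧ R.vtx b = ↑p} → ({b : B // R.vtx b = ↑p} → K),
      (∀ b0, v b0 ⟨b0.val, b0.prop.2⟩ = 1) ∧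
      (∀ b0 b1, b1.val ≠ b0.val → ¬(b1.val < b0.val ∧ b1.val ∉ β) → v b0 b1 = 0) ∧
      W p = Submodule.span K (Set.range v)

/-- The Schubert cell of the restriction of the representation to the subquiver `(S0, S1)`. -/
def CellOn [LinearOrder B] (R : Rep K V0 A B) (S0 : Set V0) (S1 : Set A) (β : Finset B) :
    Set (R.SubRepOn S0) :=
  {W | R.IsSubrepOn S0 S1 W ∧
    (∀ p : {p : V0 // p ∈ S0},
      Module.finrank K (W p) = (β.filter fun b => R.vtx b = ↑p).card) ∧
    R.InCellOn S0 β W}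

/-- The quiver Grassmannian of the restriction to the subquiver `(S0, S1)`. -/
def GrOn (R : Rep K V0 A B) (S0 : Set V0) (S1 : Set A) (e : V0 → ℕ) :
    Set (R.SubRepOn S0) :=
  {W | R.IsSubrepOn S0 S1 W ∧ ∀ p : {p : V0 // p ∈ S0}, Module.finrank K (W p) = e ↑p}

/-- Restriction of a collection of subspaces to the vertices in `S0`. -/
def resOn (R : Rep K V0 A B) (S0 : Set V0) (W : R.SubRep) : R.SubRepOn S0 :=
  fun p => W ↑p

/-- `p < q` for vertices: every basis element at `p` precedes every basis element at `q`. -/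
def vlt [LT B] (R : Rep K V0 A B) (p q : V0) : Prop :=
  ∀ b b' : B, R.vtx b = p → R.vtx b' = q → b < b'

def vle [LT B] (R : Rep K V0 A B) (p q : V0) : Prop := p = q ∨ R.vlt p q

/-- The matrix of `mmap a` with respect to the ordered bases at source and target is a
(square) identity matrix. -/
def IsIdMat [LinearOrder B] (R : Rep K V0 A B) (a : A) : Prop :=
  ∃ e : {b : B // R.vtx b = R.src a} ≃o {b : B // R.vtx b = R.tgt a},
    ∀ i, R.mmap a (Pi.single i 1) = Pi.single (e i) 1

/-- `mmap a` sends the basis vector `b0` to the basis vector `b1`. -/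
def MapsBasisTo (R : Rep K V0 A B) (a : A) (b0 b1 : B) : Prop :=
  ∃ (h0 : R.vtx b0 = R.src a) (h1 : R.vtx b1 = R.tgt a),
    R.mmap a (Pi.single ⟨b0, h0⟩ 1) = Pi.single ⟨b1, h1⟩ 1

/-- The ordered basis `B` is ordered above the subquiver `(S0, S1)`. -/
def OrderedAbove [LinearOrder B] (R : Rep K V0 A B) (S0 : Set V0) (S1 : Set A) : Prop :=
  (∀ b b' : B, R.vtx b ∈ S0 → R.vtx b' ∉ S0 → b < b') ∧
  (∀ p q : V0, p ≠ q → R.vlt p q ∨ R.vlt q p) ∧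
  (∀ (r : ℕ) (pa : Fin (r+1) → V0), pa 0 ∈ S0 → (∀ i, i ≠ 0 → pa i ∉ S0) →
    Function.Injective pa →
    (∀ i : Fin r, ∃ a : A, (R.src a = pa i.castSucc ∧ R.tgt a = pa i.succ) ∨
      (R.src a = pa i.succ ∧ R.tgt a = pa i.castSucc)) →
    ∀ i : Fin r, R.vlt (pa i.castSucc) (pa i.succ)) ∧
  (∀ a : A, a ∉ S1 → R.IsIdMat a)

end Rep

/-- The relation on the vertices of the subquiver with vertex set `T0` identifying all
vertices of `S0` with each other. -/
def treeRel {V0 : Type} (S0 T0 : Set V0) :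
    {v : V0 // v ∈ T0} → {v : V0 // v ∈ T0} → Prop :=
  fun x y => (↑x ∈ S0 ∧ ↑y ∈ S0)

/-- The subquiver `(T0, T1)` is a tree extension of the subquiver `(S0, S1)`:
the quotient quiver `T/S` (arrows of `T` not in `S`; vertices of `T` with all vertices of `S`
identified) is a tree, i.e. it is connected (as an undirected graph) and the number of its
edges is one less than the number of its vertices. -/
def IsTreeExtensionIn {V0 A : Type} (src tgt : A → V0) (T0 : Set V0) (T1 : Set A)
    (S0 : Set V0) (S1 : Set A) : Prop :=
  (∀ u v : Quot (treeRel S0 T0), Relation.ReflTransGen (fun u v =>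
      ∃ a : A, a ∈ T1 ∧ a ∉ S1 ∧ ∃ (hs : src a ∈ T0) (ht : tgt a ∈ T0),
        (Quot.mk (treeRel S0 T0) ⟨src a, hs⟩ = u ∧ Quot.mk (treeRel S0 T0) ⟨tgt a, ht⟩ = v) ∨
        (Quot.mk (treeRel S0 T0) ⟨src a, hs⟩ = v ∧ Quot.mk (treeRel S0 T0) ⟨tgt a, ht⟩ = u))
      u v) ∧
  Nat.card {a : A // a ∈ T1 ∧ a ∉ S1} + 1 = Nat.card (Quot (treeRel S0 T0))

/-- `T` (the full ambient quiver) is a tree extension of the subquiver `(S0, S1)`. -/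
def IsTreeExtension {V0 A : Type} (src tgt : A → V0) (S0 : Set V0) (S1 : Set A) : Prop :=
  IsTreeExtensionIn src tgt Set.univ Set.univ S0 S1

namespace Rep

variable {K : Type} [Field K] {V0 A B QV QA : Type}

/-- The structure map of the push-forward representation `F_*M` attached to the arrow `aq`
of the target quiver. -/
def pushMap [Fintype A] (R : Rep K V0 A B) (qsrc qtgt : QA → QV) (Fv : V0 → QV)
    (Fa : A → QA) (hFs : ∀ a : A, Fv (R.src a) = qsrc (Fa a)) (aq : QA)
    (x : {b : B // Fv (R.vtx b) = qsrc aq} → K) (c : {b : B // Fv (R.vtx b) = qtgt aq}) : K :=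
  ∑ α : A, if hα : Fa α = aq then
    (if hc : R.vtx c.val = R.tgt α then
      R.mmap α (fun b => x ⟨b.val, by rw [b.prop, hFs α, hα]⟩) ⟨c.val, hc⟩
    else 0) else 0

/-- The push-forward representation `F_*M` along the quiver morphism `F = (Fv, Fa)`. -/
def push [Fintype A] (R : Rep K V0 A B) (qsrc qtgt : QA → QV) (Fv : V0 → QV)
    (Fa : A → QA) (hFs : ∀ a : A, Fv (R.src a) = qsrc (Fa a)) : Rep K QV QA B where
  src := qsrc
  tgt := qtgt
  vtx := fun b => Fv (R.vtx b)
  mmap := R.pushMap qsrc qtgt Fv Fa hFs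

/-- The push-forward `F_*V` of a collection of subspaces: at the vertex `q` of `Q` it consists
of all vectors whose component in each `M_p` with `Fv p = q` lies in `V_p`. -/
def pushSub (R : Rep K V0 A B) (Fv : V0 → QV) (W : R.SubRep) :
    ∀ q : QV, Submodule K ({b : B // Fv (R.vtx b) = q} → K) := fun q =>
  { carrier := {x | ∀ (p : V0) (hq : Fv p = q),
      (fun b : {b : B // R.vtx b = p} =>
        x ⟨b.val, by rw [b.prop]; exact hq⟩) ∈ W p}
    add_mem' := fun hx hy p hq => (W p).add_mem (hx p hq) (hy p hq)
    zero_mem' := fun p hq => (W p).zero_mem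
    smul_mem' := fun c x hx p hq => (W p).smul_mem c (hx p hq) }

/-- `reach n p` : there is an (undirected) walk of length `n` from `p` into `S0`. -/
def reach (R : Rep K V0 A B) (S0 : Set V0) : ℕ → V0 → Prop
  | 0, p => p ∈ S0
  | (n+1), p => ∃ a : A, (R.src a = p ∧ R.reach S0 n (R.tgt a)) ∨
      (R.tgt a = p ∧ R.reach S0 n (R.src a))

/-- The graph distance from `p` to the vertex set `S0`. -/
def distS (R : Rep K V0 A B) (S0 : Set V0) (p : V0) : ℕ :=
  sInf {n : ℕ | R.reach S0 n p}

/-- The fibre length `ε(p,p')` of a pair of vertices. -/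
def eps [LT B] (R : Rep K V0 A B) (Fv : V0 → QV) (p p' : V0) : ℕ :=
  Set.ncard {p'' : V0 | Fv p'' = Fv p ∧ R.vle p p'' ∧ R.vlt p'' p'}

/-- Lexicographic comparison `Ψ(p,p') < Ψ(q,q')`. -/
def psiLt [LT B] (R : Rep K V0 A B) (S0 : Set V0) (Fv : V0 → QV) (p p' q q' : V0) : Prop :=
  R.eps Fv p p' < R.eps Fv q q' ∨ (R.eps Fv p p' = R.eps Fv q q' ∧
    (max (R.distS S0 p) (R.distS S0 p') < max (R.distS S0 q) (R.distS S0 q') ∨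
     (max (R.distS S0 p) (R.distS S0 p') = max (R.distS S0 q) (R.distS S0 q') ∧
       R.vlt p' q')))

def type0 [LT B] (R : Rep K V0 A B) (Fa : A → QA) (aq : QA) (t s : V0) : Prop :=
  ¬ ∃ α : A, Fa α = aq ∧ R.vle (R.src α) s ∧ R.vle t (R.tgt α)

def type1 (R : Rep K V0 A B) (Fa : A → QA) (aq : QA) (t s : V0) : Prop :=
  ∃ α : A, Fa α = aq ∧ R.src α = s ∧ R.tgt α = t

def type2a [LT B] (R : Rep K V0 A B) (S0 : Set V0) (Fv : V0 → QV) (Fa : A → QA)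
    (aq : QA) (t s : V0) : Prop :=
  ∃ α' α'' : A, Fa α' = aq ∧ Fa α'' = aq ∧ R.tgt α' = t ∧ R.vlt (R.src α') s ∧
    R.src α'' = s ∧ R.vlt (R.tgt α'') t ∧ R.psiLt S0 Fv t (R.tgt α'') (R.src α') s

def type2b [LT B] (R : Rep K V0 A B) (S0 : Set V0) (Fv : V0 → QV) (Fa : A → QA)
    (aq : QA) (t s : V0) : Prop :=
  ∃ α' α'' : A, Fa α' = aq ∧ Fa α'' = aq ∧ R.tgt α' = t ∧ R.vlt (R.src α') s ∧
    R.src α'' = s ∧ R.vlt (R.tgt α'') t ∧ R.psiLt S0 Fv (R.src α') s t (R.tgt α'')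

def type3a [LT B] (R : Rep K V0 A B) (S0 : Set V0) (Fv : V0 → QV) (Fa : A → QA)
    (aq : QA) (t s : V0) : Prop :=
  ∃ α'' : A, Fa α'' = aq ∧ R.src α'' = s ∧ R.vlt t (R.tgt α'') ∧
    (¬ ∃ α : A, Fa α = aq ∧ R.tgt α = t) ∧
    ∀ α : A, Fa α = aq → R.vlt t (R.tgt α) → R.vlt (R.tgt α) (R.tgt α'') →
      R.psiLt S0 Fv (R.src α) s t (R.tgt α'')

def type4a [LT B] (R : Rep K V0 A B) (S0 : Set V0) (Fv : V0 → QV) (Fa : A → QA)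
    (aq : QA) (t s : V0) : Prop :=
  ∃ α' : A, Fa α' = aq ∧ R.tgt α' = t ∧ R.vlt (R.src α') s ∧
    (¬ ∃ α : A, Fa α = aq ∧ R.src α = s) ∧
    ∀ α : A, Fa α = aq → R.vlt (R.src α') (R.src α) → R.vlt (R.src α) s →
      R.psiLt S0 Fv t (R.tgt α) (R.src α') s

/-- `F` is strictly ordered with respect to the ordered basis. -/
def StrictlyOrdered [LT B] (R : Rep K V0 A B) (Fa : A → QA) : Prop :=
  ∀ α α' : A, α ≠ α' → Fa α = Fa α' →
    (R.vlt (R.src α) (R.src α') ∧ R.vlt (R.tgt α) (R.tgt α')) ∨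
    (R.vlt (R.src α') (R.src α) ∧ R.vlt (R.tgt α') (R.tgt α))

/-- The pair `(p, p')` is a relevant pair. -/
def relPair [LT B] (R : Rep K V0 A B) (S0 : Set V0) (Fv : V0 → QV) (p p' : V0) : Prop :=
  Fv p = Fv p' ∧ R.vle p p' ∧ p' ∉ S0

/-- Condition of Hypothesis (H) on outgoing arrows at the relevant pair `(p, p')`. -/
def outOK [LT B] (R : Rep K V0 A B) (S0 : Set V0) (Fv : V0 → QV) (Fa : A → QA)
    (qsrc qtgt : QA → QV) (p p' : V0) (aq : QA) : Prop :=
  qsrc aq = Fv p →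
    ((¬ ∃ α : A, Fa α = aq ∧ R.src α = p') →
      ∀ q : V0, Fv q = qtgt aq → R.type0 Fa aq q p') ∧
    ((∃ α : A, Fa α = aq ∧ R.src α = p') →
      ∃ α : A, Fa α = aq ∧ R.src α = p ∧
        (R.type1 Fa aq (R.tgt α) p' ∨ R.type2b S0 Fv Fa aq (R.tgt α) p'))

/-- Condition of Hypothesis (H) on incoming arrows at the relevant pair `(p, p')`. -/
def inOK [LT B] (R : Rep K V0 A B) (S0 : Set V0) (Fv : V0 → QV) (Fa : A → QA)
    (qsrc qtgt : QA → QV) (p p' : V0) (aq : QA) : Prop :=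
  qtgt aq = Fv p →
    ((¬ ∃ α : A, Fa α = aq ∧ R.tgt α = p) →
      ∀ q' : V0, Fv q' = qsrc aq → R.type0 Fa aq p q') ∧
    ((∃ α : A, Fa α = aq ∧ R.tgt α = p) →
      ∃ α : A, Fa α = aq ∧ R.tgt α = p' ∧
        (R.type1 Fa aq p (R.src α) ∨ R.type2a S0 Fv Fa aq p (R.src α)))

/-- Exceptional situation (1) of Hypothesis (H). -/
def exc1 [LinearOrder B] (R : Rep K V0 A B) (S0 : Set V0) (S1 : Set A) (Fv : V0 → QV)
    (Fa : A → QA) (qsrc : QA → QV) (p p' : V0) (aq : QA) : Prop :=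
  qsrc aq = Fv p ∧ ∃ α : A, Fa α = aq ∧ R.src α = p ∧
    (R.type2a S0 Fv Fa aq (R.tgt α) p' ∨ R.type4a S0 Fv Fa aq (R.tgt α) p') ∧
    (α ∈ S1 → R.IsIdMat α)

/-- Exceptional situation (2) of Hypothesis (H). -/
def exc2 [LT B] (R : Rep K V0 A B) (S0 : Set V0) (Fv : V0 → QV) (Fa : A → QA)
    (qtgt : QA → QV) (p p' : V0) (aq : QA) : Prop :=
  qtgt aq = Fv p ∧ ∃ α : A, Fa α = aq ∧ R.tgt α = p' ∧
    (R.type2b S0 Fv Fa aq p (R.src α) ∨ R.type3a S0 Fv Fa aq p (R.src α))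

/-- Hypothesis (H). -/
def HypH [LinearOrder B] (R : Rep K V0 A B) (S0 : Set V0) (S1 : Set A)
    (qsrc qtgt : QA → QV) (Fv : V0 → QV) (Fa : A → QA) : Prop :=
  R.StrictlyOrdered Fa ∧
  ∀ p p' : V0, R.relPair S0 Fv p p' →
    ((∀ aq : QA, R.outOK S0 Fv Fa qsrc qtgt p p' aq ∧ R.inOK S0 Fv Fa qsrc qtgt p p' aq) ∨
     (∃ aq0 : QA,
        (R.exc1 S0 S1 Fv Fa qsrc p p' aq0 ∨ R.exc2 S0 Fv Fa qtgt p p' aq0) ∧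
        ∀ aq : QA, aq ≠ aq0 →
          R.outOK S0 Fv Fa qsrc qtgt p p' aq ∧ R.inOK S0 Fv Fa qsrc qtgt p p' aq))


end Rep

end QGr

namespace QGr

theorem comp_mem_of_mem_span_range {K ι κ J : Type*} [Field K] {v : J → ι → K} (f : κ → ι)
    {W : Submodule K (κ → K)} (h : ∀ i, v i ∘ f ∈ W) {x : ι → K}
    (hx : x ∈ Submodule.span K (Set.range v)) : x ∘ f ∈ W :=
  (Submodule.span_le (p := W.comap (LinearMap.funLeft K K f))).2 (Set.range_subset_iff.2 h) hx

section Echelon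

variable {K ι κ : Type*} [Field K] [LinearOrder ι] [LinearOrder κ]

def IsEchelon (s : Set ι) (v : s → ι → K) : Prop :=
  ∀ i : s, v i i = 1 ∧ ∀ j, v i j ≠ 0 → j = i ∨ (j < i ∧ j ∉ s)

def IsCellSubspace (s : Set ι) (U : Submodule K (ι → K)) : Prop :=
  ∃ v : s → ι → K, IsEchelon s v ∧ U = Submodule.span K (Set.range v)

namespace IsEchelon

variable {s : Set ι} {v : s → ι → K}

theorem apply_pivot_of_ne (hv : IsEchelon s v) {i j : s} (hij : j ≠ i) : v i j = 0 := by
  by_contra h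
  rcases (hv i).2 j h with h | ⟨-, h⟩
  · exact hij (Subtype.ext h)
  · exact h j.2

section

variable [Fintype s]

theorem sum_smul_apply_pivot (hv : IsEchelon s v) (g : s → K) (j : s) :
    (∑ i, g i • v i) j = g j := by
  rw [Finset.sum_apply, Finset.sum_eq_single j (fun i _ hij => by
    simp [hv.apply_pivot_of_ne (Ne.symm hij)]) (by simp)]
  simp [(hv j).1]

theorem linearIndependent (hv : IsEchelon s v) : LinearIndependent K v :=
  Fintype.linearIndependent_iff.2 fun g hg j => by
    simpa using (hv.sum_smul_apply_pivot g j).symm.trans (congrFun hg j)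

theorem finrank_span (hv : IsEchelon s v) :
    Module.finrank K (Submodule.span K (Set.range v)) = Fintype.card s :=
  finrank_span_eq_card hv.linearIndependent

theorem eq_sum_of_mem_span (hv : IsEchelon s v) {x : ι → K}
    (hx : x ∈ Submodule.span K (Set.range v)) : x = ∑ i : s, x i • v i := by
  obtain ⟨g, rfl⟩ := (Submodule.mem_span_range_iff_exists_fun K).1 hx
  simp_rw [hv.sum_smul_apply_pivot]

theorem exists_pivot_le_of_mem_span (hv : IsEchelon s v) {x : ι → K}
    (hx : x ∈ Submodule.span K (Set.range v)) {j : ι} (hj : x j ≠ 0) :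
    ∃ i : s, j ≤ ↑i ∧ x i ≠ 0 := by
  rw [hv.eq_sum_of_mem_span hx, Finset.sum_apply] at hj
  obtain ⟨i, -, hi⟩ := Finset.exists_ne_zero_of_sum_ne_zero hj
  rw [Pi.smul_apply, smul_eq_mul] at hi
  refine ⟨i, ?_, left_ne_zero_of_mul hi⟩
  rcases (hv i).2 j (right_ne_zero_of_mul hi) with rfl | ⟨h, -⟩
  exacts [le_rfl, h.le]

end

theorem apply_mem_of_comp_symm_mem_span {t : Set κ} [Fintype t] {w : t → κ → K}
    (hv : IsEchelon s v) (hw : IsEchelon t w) (e : ι ≃o κ)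
    (h : ∀ i, v i ∘ e.symm ∈ Submodule.span K (Set.range w)) (i : s) : e i ∈ t := by
  obtain ⟨c, hic, hc⟩ := hw.exists_pivot_le_of_mem_span (h i) (j := e i) (by simp [(hv i).1])
  rcases (hv i).2 _ hc with hci | ⟨hci, -⟩
  · rw [← hci, e.apply_symm_apply]
    exact c.2
  · exact absurd hic (not_le.2 (e.symm_apply_lt.1 hci))

end IsEchelon

theorem isEchelon_single (s : Set ι) : IsEchelon s (fun i : s => Pi.single (i : ι) (1 : K)) :=
  fun i => ⟨by simp, fun j hj => .inl (by simpa [Pi.single_apply] using hj)⟩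

variable {s : Set ι} {t : Set κ}

theorem single_comp_symm_mem_span_single (e : ι ≃o κ) (hst : ∀ i ∈ s, e i ∈ t) {x : ι → K}
    (hx : x ∈ Submodule.span K (Set.range fun i : s => Pi.single (i : ι) (1 : K))) :
    x ∘ e.symm ∈ Submodule.span K (Set.range fun j : t => Pi.single (j : κ) (1 : K)) := by
  refine comp_mem_of_mem_span_range _ (fun i => Submodule.subset_span ?_) hx
  exact ⟨⟨e i, hst i i.2⟩, (Pi.single_comp_equiv e.symm.toEquiv (i : ι) (1 : K)).symm⟩

theorem IsCellSubspace.exists_comp_symm_le (e : ι ≃o κ) (hst : ∀ i ∈ s, e i ∈ t)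
    {W : Submodule K (κ → K)} (hW : IsCellSubspace t W) :
    ∃ U : Submodule K (ι → K), IsCellSubspace s U ∧ ∀ x ∈ U, x ∘ e.symm ∈ W := by
  obtain ⟨w, hw, rfl⟩ := hW
  let v : s → ι → K := fun i => w ⟨e i, hst i i.2⟩ ∘ e
  have hv : IsEchelon s v := fun i => ⟨(hw _).1, fun j hj => ?_⟩
  · refine ⟨_, ⟨v, hv, rfl⟩, fun x => comp_mem_of_mem_span_range _ fun i => ?_⟩
    exact Submodule.subset_span ⟨⟨e i, hst i i.2⟩, by funext k; simp [v]⟩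
  · rcases (hw _).2 _ hj with h | ⟨h, h'⟩
    · exact .inl (e.injective h)
    · exact .inr ⟨e.lt_iff_lt.1 h, fun hj => h' (hst j hj)⟩

/-- The rows of the image of `v` under `x ↦ x ∘ e.symm`, with the entries in the columns of the
new pivots `t` cleared, completed by unit rows at the pivots of `t` not coming from `s`. -/
def pushRows (e : ι ≃o κ) (t : Set κ) (v : s → ι → K) (c : t) : κ → K :=
  if h : e.symm c ∈ s then fun k => if k ∈ t ∧ k ≠ c then 0 else v ⟨_, h⟩ (e.symm k)
  else Pi.single (c : κ) 1

theorem pushRows_apply_image (e : ι ≃o κ) (v : s → ι → K) (hst : ∀ i ∈ s, e i ∈ t) (i : s)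
    (k : κ) :
    pushRows e t v ⟨e i, hst i i.2⟩ k = if k ∈ t ∧ k ≠ e i then 0 else v i (e.symm k) := by
  simp [pushRows]

theorem isEchelon_pushRows {v : s → ι → K} (hv : IsEchelon s v) (e : ι ≃o κ) :
    IsEchelon t (pushRows e t v) := by
  intro c
  unfold QGr.pushRows
  split_ifs with h
  · refine ⟨by simpa using (hv _).1, fun k hk => ?_⟩
    simp only [ne_eq, ite_eq_left_iff, not_and, not_not, Classical.not_imp] at hk
    rcases (hv _).2 _ hk.2 with h' | ⟨h', -⟩
    · exact .inl (e.symm.injective h')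
    · have hkc : k < c := e.symm.lt_iff_lt.1 h'
      exact .inr ⟨hkc, fun hkt => hkc.ne (hk.1 hkt)⟩
  · exact isEchelon_single t c

theorem IsEchelon.comp_symm_mem_span_pushRows [Fintype κ] {v : s → ι → K} (hv : IsEchelon s v)
    (e : ι ≃o κ) (hst : ∀ i ∈ s, e i ∈ t) (i : s) :
    v i ∘ e.symm ∈ Submodule.span K (Set.range (pushRows e t v)) := by
  set P := Submodule.span K (Set.range (pushRows e t v))
  set r := pushRows e t v ⟨e i, hst i i.2⟩
  have hr : r ∈ P := Submodule.subset_span (Set.mem_range_self _)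
  -- `v i ∘ e.symm - r` lives in the columns `k ∈ t` with `e.symm k ∉ s`, whose rows are unit rows
  have hrest : ∀ k, Pi.single k ((v i ∘ e.symm - r) k) ∈ P := by
    intro k
    by_cases hk : k ∈ t ∧ k ≠ e i
    · have hxk : (v i ∘ e.symm - r) k = v i (e.symm k) := by
        simp [r, pushRows_apply_image, hk]
      rw [hxk]
      by_cases h0 : v i (e.symm k) = 0
      · simp [h0]
      have hks : e.symm k ∉ s := by
        rcases (hv i).2 _ h0 with h | ⟨-, h⟩
        · exact absurd (e.symm_apply_eq.1 h) hk.2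
        · exact h
      have hunit : pushRows e t v ⟨k, hk.1⟩ = Pi.single k 1 := by simp [pushRows, hks]
      rw [← mul_one (v i (e.symm k)), ← smul_eq_mul, Pi.single_smul, ← hunit]
      exact P.smul_mem _ (Submodule.subset_span (Set.mem_range_self _))
    · simp [r, pushRows_apply_image, hk]
  have hx : v i ∘ e.symm = r + ∑ k, Pi.single k ((v i ∘ e.symm - r) k) := by
    rw [Finset.univ_sum_single]
    abel
  rw [hx]
  exact P.add_mem hr (P.sum_mem fun k _ => hrest k)

theorem IsCellSubspace.exists_le_comp_symm [Fintype κ] (e : ι ≃o κ) (hst : ∀ i ∈ s, e i ∈ t)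
    {U : Submodule K (ι → K)} (hU : IsCellSubspace s U) :
    ∃ W : Submodule K (κ → K), IsCellSubspace t W ∧ ∀ x ∈ U, x ∘ e.symm ∈ W := by
  obtain ⟨v, hv, rfl⟩ := hU
  exact ⟨_, ⟨_, isEchelon_pushRows hv e, rfl⟩,
    fun x => comp_mem_of_mem_span_range _ (hv.comp_symm_mem_span_pushRows e hst)⟩

theorem IsCellSubspace.finrank_eq [Finite s] {U : Submodule K (ι → K)} (hU : IsCellSubspace s U) :
    Module.finrank K U = Nat.card s := by
  have := Fintype.ofFinite s
  obtain ⟨v, hv, rfl⟩ := hU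
  rw [Nat.card_eq_fintype_card]
  exact hv.finrank_span

end Echelon

namespace Rep

section Pivots

variable {K V0 A B : Type} [Field K]

def pivots (R : Rep K V0 A B) (β : Finset B) (p : V0) : Set {b : B // R.vtx b = p} :=
  {i | i.1 ∈ β}

theorem nat_card_pivots [Fintype B] (R : Rep K V0 A B) (β : Finset B) (p : V0) :
    Nat.card (R.pivots β p) = (β.filter fun b => R.vtx b = p).card := by
  rw [← Nat.card_eq_finsetCard]
  exact Nat.card_congr ((Equiv.subtypeSubtypeEquivSubtypeInter _ (· ∈ β)).trans
    (Equiv.subtypeEquivRight fun b => by simp [and_comm]))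

theorem pivots_filter (R : Rep K V0 A B) (β : Finset B) {S0 : Set V0} {p : V0} (hp : p ∈ S0) :
    R.pivots (β.filter fun b => R.vtx b ∈ S0) p = R.pivots β p := by
  ext i
  simp [pivots, i.2, hp]

end Pivots

section CellSubspaces

variable {K V0 A B : Type} [Field K] [LinearOrder B]

theorem exists_echelon_iff_isCellSubspace (f : B → V0) (β : Finset B) (p : V0)
    (U : Submodule K ({b : B // f b = p} → K)) :
    (∃ v : {b : B // b ∈ β ∧ f b = p} → ({b : B // f b = p} → K),
      (∀ b0, v b0 ⟨b0.val, b0.prop.2⟩ = 1) ∧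
      (∀ b0 b1, b1.val ≠ b0.val → ¬(b1.val < b0.val ∧ b1.val ∉ β) → v b0 b1 = 0) ∧
      U = Submodule.span K (Set.range v)) ↔
    IsCellSubspace {i : {b : B // f b = p} | i.1 ∈ β} U := by
  let σ : {b : B // b ∈ β ∧ f b = p} ≃ {i : {b : B // f b = p} // i.1 ∈ β} :=
    ⟨fun b => ⟨⟨b.1, b.2.2⟩, b.2.1⟩, fun i => ⟨i.1.1, i.2, i.1.2⟩, fun _ => rfl, fun _ => rfl⟩
  constructor
  · rintro ⟨v, h1, h2, rfl⟩
    refine ⟨v ∘ σ.symm, fun i => ⟨h1 _, fun j hj => ?_⟩, congrArg _ (EquivLike.range_comp _ _).symm⟩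
    by_contra hji
    exact hj (h2 _ _ (fun h => hji (.inl (Subtype.ext h))) fun h => hji (.inr h))
  · rintro ⟨w, hw, rfl⟩
    refine ⟨w ∘ σ, fun b0 => (hw _).1, fun b0 b1 hne hlt => ?_,
      congrArg _ (EquivLike.range_comp _ _).symm⟩
    by_contra h
    rcases (hw _).2 b1 h with h' | h'
    exacts [hne (congrArg Subtype.val h'), hlt h']

theorem mem_cell_iff [Fintype B] (R : Rep K V0 A B) (β : Finset B) (W : R.SubRep) :
    W ∈ R.Cell β ↔ R.IsSubrep W ∧ ∀ p, IsCellSubspace (R.pivots β p) (W p) := by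
  have hcell : R.InCell β W ↔ ∀ p, IsCellSubspace (R.pivots β p) (W p) :=
    forall_congr' fun p => exists_echelon_iff_isCellSubspace R.vtx β p (W p)
  refine ⟨fun h => ⟨h.1, hcell.1 h.2.2⟩, fun h => ⟨h.1, fun p => ?_, hcell.2 h.2⟩⟩
  rw [(h.2 p).finrank_eq, nat_card_pivots]

theorem mem_cellOn_iff [Fintype B] (R : Rep K V0 A B) (S0 : Set V0) (S1 : Set A) (β : Finset B)
    (V : R.SubRepOn S0) :
    V ∈ R.CellOn S0 S1 β ↔
      R.IsSubrepOn S0 S1 V ∧ ∀ p : {p // p ∈ S0}, IsCellSubspace (R.pivots β p) (V p) := by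
  have hcell : R.InCellOn S0 β V ↔ ∀ p : {p // p ∈ S0}, IsCellSubspace (R.pivots β p) (V p) :=
    forall_congr' fun p => exists_echelon_iff_isCellSubspace R.vtx β p (V p)
  refine ⟨fun h => ⟨h.1, hcell.1 h.2.2⟩, fun h => ⟨h.1, fun p => ?_, hcell.2 h.2⟩⟩
  rw [(h.2 p).finrank_eq, nat_card_pivots]

theorem resOn_mem_cellOn [Fintype B] {R : Rep K V0 A B} {S0 : Set V0} {S1 : Set A}
    {β : Finset B} {W : R.SubRep} (hW : W ∈ R.Cell β) :
    R.resOn S0 W ∈ R.CellOn S0 S1 (β.filter fun b => R.vtx b ∈ S0) := by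
  obtain ⟨hsub, hcell⟩ := (mem_cell_iff R β W).1 hW
  refine (mem_cellOn_iff R S0 S1 _ _).2 ⟨fun a _ _ _ x hx => hsub a x hx, fun p => ?_⟩
  rw [pivots_filter R β p.2]
  exact hcell p

end CellSubspaces

section Stable

variable {K V0 A B : Type} [Field K] (R : Rep K V0 A B)

def IsStable (W : R.SubRep) (a : A) : Prop :=
  ∀ x ∈ W (R.src a), R.mmap a x ∈ W (R.tgt a)

variable {R}

theorem IsStable.update {W : ∀ p, Submodule K ({b : B // R.vtx b = p} → K)} {a : A}
    (h : R.IsStable W a) {p : V0} (U : Submodule K ({b : B // R.vtx b = p} → K))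
    (hs : R.src a ≠ p) (ht : R.tgt a ≠ p) : R.IsStable (Function.update W p U) a := by
  intro x hx
  rw [Function.update_of_ne hs] at hx
  rw [Function.update_of_ne ht]
  exact h x hx

end Stable

section IdentityArrow

variable {K V0 A B : Type} [Field K] [Fintype B] [LinearOrder B] {R : Rep K V0 A B} {a : A}
  {e : {b : B // R.vtx b = R.src a} ≃o {b : B // R.vtx b = R.tgt a}}

theorem mmap_eq_comp_symm (hlin : R.Linear)
    (he : ∀ i, R.mmap a (Pi.single i 1) = Pi.single (e i) 1)
    (x : {b : B // R.vtx b = R.src a} → K) :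
    R.mmap a x = x ∘ e.symm := by
  have : IsLinearMap.mk' _ (hlin a) = LinearMap.funLeft K K e.symm := by
    refine LinearMap.pi_ext fun i c => ?_
    have hc : Pi.single i c = c • Pi.single i (1 : K) := by
      rw [← Pi.single_smul, smul_eq_mul, mul_one]
    rw [hc, map_smul, map_smul, IsLinearMap.mk'_apply, he]
    exact congrArg _ (Pi.single_comp_equiv e.symm.toEquiv i 1).symm
  exact congrArg (· x) this

theorem mapsBasisTo_iff (hlin : R.Linear) (he : ∀ i, R.mmap a (Pi.single i 1) = Pi.single (e i) 1)
    {b0 b1 : B} (h0 : R.vtx b0 = R.src a) : R.MapsBasisTo a b0 b1 ↔ (e ⟨b0, h0⟩ : B) = b1 := by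
  constructor
  · rintro ⟨h0', h1, h⟩
    have := congrFun h (e ⟨b0, h0⟩)
    rw [mmap_eq_comp_symm hlin he] at this
    simp only [Function.comp_apply, OrderIso.symm_apply_apply, Pi.single_apply] at this
    simpa [Subtype.ext_iff] using this
  · rintro rfl
    refine ⟨h0, (e _).2, ?_⟩
    rw [mmap_eq_comp_symm hlin he]
    funext k
    simp [Pi.single_apply, e.symm_apply_eq, Subtype.ext_iff]

theorem forall_exists_mapsBasisTo_iff (hlin : R.Linear)
    (he : ∀ i, R.mmap a (Pi.single i 1) = Pi.single (e i) 1) {β : Finset B} :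
    (∀ b0 ∈ β, R.vtx b0 = R.src a → ∃ b1 ∈ β, R.MapsBasisTo a b0 b1) ↔
      ∀ i ∈ R.pivots β (R.src a), e i ∈ R.pivots β (R.tgt a) := by
  refine ⟨fun h i hi => ?_, fun h b0 hb0 h0 => ?_⟩
  · obtain ⟨b1, hb1, hmaps⟩ := h i.1 hi i.2
    rwa [← (mapsBasisTo_iff hlin he i.2).1 hmaps] at hb1
  · exact ⟨_, h ⟨b0, h0⟩ hb0, (mapsBasisTo_iff hlin he h0).2 rfl⟩

theorem mem_pivots_of_mem_cell (hlin : R.Linear)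
    (he : ∀ i, R.mmap a (Pi.single i 1) = Pi.single (e i) 1) {β : Finset B} {W : R.SubRep}
    (hW : W ∈ R.Cell β) {i : {b : B // R.vtx b = R.src a}} (hi : i ∈ R.pivots β (R.src a)) :
    e i ∈ R.pivots β (R.tgt a) := by
  obtain ⟨hsub, hcell⟩ := (mem_cell_iff R β W).1 hW
  obtain ⟨v, hv, hvW⟩ := hcell (R.src a)
  obtain ⟨w, hw, hwW⟩ := hcell (R.tgt a)
  refine hv.apply_mem_of_comp_symm_mem_span hw e (fun j => ?_) ⟨i, hi⟩
  rw [← hwW, ← mmap_eq_comp_symm hlin he]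
  exact hsub a _ (hvW ▸ Submodule.subset_span (Set.mem_range_self j))

theorem exists_update_isStable (hlin : R.Linear)
    (he : ∀ i, R.mmap a (Pi.single i 1) = Pi.single (e i) 1) {β : Finset B}
    (hcl : ∀ i ∈ R.pivots β (R.src a), e i ∈ R.pivots β (R.tgt a))
    {W : ∀ p, Submodule K ({b : B // R.vtx b = p} → K)}
    (hW : ∀ p, IsCellSubspace (R.pivots β p) (W p)) (hloop : R.src a ≠ R.tgt a) {p : V0}
    (hp : R.src a = p ∨ R.tgt a = p) :
    ∃ U, IsCellSubspace (R.pivots β p) U ∧ R.IsStable (Function.update W p U) a := by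
  rcases hp with rfl | rfl
  · obtain ⟨U, hU, hUW⟩ := (hW (R.tgt a)).exists_comp_symm_le e hcl
    refine ⟨U, hU, fun x hx => ?_⟩
    rw [Function.update_self] at hx
    rw [Function.update_of_ne hloop.symm, mmap_eq_comp_symm hlin he]
    exact hUW x hx
  · obtain ⟨U, hU, hWU⟩ := (hW (R.src a)).exists_le_comp_symm e hcl
    refine ⟨U, hU, fun x hx => ?_⟩
    rw [Function.update_of_ne hloop] at hx
    rw [Function.update_self, mmap_eq_comp_symm hlin he]
    exact hWU x hx

end IdentityArrow

section Tree

variable {K V0 A B : Type} [Field K] (R : Rep K V0 A B) (S0 : Set V0)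

def IsParentArrow (p : V0) (a : A) : Prop :=
  (R.src a = p ∧ R.distS S0 (R.tgt a) < R.distS S0 p) ∨
    (R.tgt a = p ∧ R.distS S0 (R.src a) < R.distS S0 p)

variable {R S0} {S1 : Set A} {p q : V0} {a : A}

theorem IsParentArrow.src_ne_tgt (h : R.IsParentArrow S0 p a) : R.src a ≠ R.tgt a := by
  intro hst
  rcases h with ⟨rfl, h⟩ | ⟨rfl, h⟩ <;> simp [hst] at h

theorem IsParentArrow.src_eq_or_tgt_eq (h : R.IsParentArrow S0 p a) : R.src a = p ∨ R.tgt a = p :=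
  h.imp And.left And.left

theorem IsParentArrow.eq (hp : R.IsParentArrow S0 p a) (hq : R.IsParentArrow S0 q a) : p = q := by
  rcases hp with ⟨rfl, hp⟩ | ⟨rfl, hp⟩ <;> rcases hq with ⟨hq', hq⟩ | ⟨hq', hq⟩
  all_goals first | exact hq' | (subst hq'; omega)

theorem IsParentArrow.src_ne_and_tgt_ne (hq : R.IsParentArrow S0 q a) (hne : q ≠ p)
    (hle : R.distS S0 q ≤ R.distS S0 p) : R.src a ≠ p ∧ R.tgt a ≠ p := by
  rcases hq with ⟨rfl, hq⟩ | ⟨rfl, hq⟩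
  · exact ⟨hne, by rintro rfl; omega⟩
  · exact ⟨by rintro rfl; omega, hne⟩

theorem exists_reach (htree : IsTreeExtension R.src R.tgt S0 S1) {s0 : V0} (hs0 : s0 ∈ S0)
    (p : V0) : ∃ n, R.reach S0 n p := by
  -- reachability is constant on the collapsed vertex `S0` of `T/S`
  let P : Quot (treeRel S0 Set.univ) → Prop :=
    Quot.lift (fun x => ∃ n, R.reach S0 n x.1) fun _ _ h =>
      propext ⟨fun _ => ⟨0, h.2⟩, fun _ => ⟨0, h.1⟩⟩
  suffices ∀ u, P u from this (Quot.mk _ ⟨p, trivial⟩)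
  intro u
  have hpath := htree.1 (Quot.mk _ ⟨s0, trivial⟩) u
  induction hpath with
  | refl => exact ⟨0, hs0⟩
  | tail _ hstep ih =>
    obtain ⟨a, -, -, hs, ht, ⟨rfl, rfl⟩ | ⟨rfl, rfl⟩⟩ := hstep
    · obtain ⟨n, hn⟩ := ih
      exact ⟨n + 1, a, .inr ⟨rfl, hn⟩⟩
    · obtain ⟨n, hn⟩ := ih
      exact ⟨n + 1, a, .inl ⟨rfl, hn⟩⟩

theorem exists_isParentArrow (hsub : ∀ a ∈ S1, R.src a ∈ S0 ∧ R.tgt a ∈ S0)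
    (htree : IsTreeExtension R.src R.tgt S0 S1) {s0 : V0} (hs0 : s0 ∈ S0) (hp : p ∉ S0) :
    ∃ a ∉ S1, R.IsParentArrow S0 p a := by
  have hmem : R.reach S0 (R.distS S0 p) p := Nat.sInf_mem (exists_reach htree hs0 p)
  obtain ⟨m, hm⟩ := Nat.exists_eq_succ_of_ne_zero (n := R.distS S0 p) fun h => hp (by
    rw [h] at hmem
    exact hmem)
  rw [hm] at hmem
  obtain ⟨a, ha⟩ := hmem
  have hlt : ∀ q, R.reach S0 m q → R.distS S0 q < R.distS S0 p := fun q hq => by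
    rw [hm]
    exact Nat.lt_succ_of_le (Nat.sInf_le hq)
  refine ⟨a, fun haS1 => ?_, ha.imp (fun h => ⟨h.1, hlt _ h.2⟩) fun h => ⟨h.1, hlt _ h.2⟩⟩
  rcases ha with ⟨rfl, -⟩ | ⟨rfl, -⟩
  exacts [hp (hsub a haS1).1, hp (hsub a haS1).2]

theorem nat_card_quot_treeRel [Finite V0] {s0 : V0} (hs0 : s0 ∈ S0) :
    Nat.card (Quot (treeRel S0 (Set.univ : Set V0))) = Nat.card {p // p ∉ S0} + 1 := by
  let f : Quot (treeRel S0 Set.univ) → {p // p ∉ S0} ⊕ Unit :=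
    Quot.lift (fun x => if h : x.1 ∈ S0 then .inr () else .inl ⟨x.1, h⟩) fun x y h => by
      simp [h.1, h.2]
  have hf : Function.Bijective f := by
    refine ⟨?_, ?_⟩
    · rintro ⟨x⟩ ⟨y⟩ hxy
      by_cases hx : x.1 ∈ S0 <;> by_cases hy : y.1 ∈ S0 <;> simp [f, hx, hy] at hxy
      · exact Quot.sound ⟨hx, hy⟩
      · exact congrArg _ (Subtype.ext hxy)
    · rintro (p | ⟨⟩)
      · exact ⟨Quot.mk _ ⟨p.1, trivial⟩, by simp [f, p.2]⟩
      · exact ⟨Quot.mk _ ⟨s0, trivial⟩, by simp [f, hs0]⟩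
  rw [Nat.card_congr (Equiv.ofBijective f hf), Nat.card_sum, Nat.card_unique (α := Unit)]

/-- The choice of parent arrows is injective, and the tree condition says that `T − S` has as many
arrows as there are vertices outside `S0`. -/
theorem exists_eq_parent [Finite V0] [Finite A] (htree : IsTreeExtension R.src R.tgt S0 S1)
    {s0 : V0} (hs0 : s0 ∈ S0) (par : ∀ p, p ∉ S0 → A)
    (hpar : ∀ p hp, par p hp ∉ S1 ∧ R.IsParentArrow S0 p (par p hp)) (ha : a ∉ S1) :
    ∃ p hp, par p hp = a := by
  let f : {p // p ∉ S0} → {a // a ∉ S1} := fun p => ⟨par p.1 p.2, (hpar p.1 p.2).1⟩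
  have hinj : f.Injective := fun p q h => by
    have h' : par p.1 p.2 = par q.1 q.2 := congrArg Subtype.val h
    exact Subtype.ext ((hpar p.1 p.2).2.eq (h' ▸ (hpar q.1 q.2).2))
  have hcard : Nat.card {a // a ∉ S1} ≤ Nat.card {p // p ∉ S0} := by
    have h := htree.2
    rw [nat_card_quot_treeRel hs0, Nat.card_congr (Equiv.subtypeEquivRight
      (p := fun a => a ∈ Set.univ ∧ a ∉ S1) (q := (· ∉ S1)) fun a => by simp)] at h
    omega
  obtain ⟨p, hp⟩ := (hinj.bijective_of_nat_card_le hcard).2 ⟨a, ha⟩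
  exact ⟨p.1, p.2, congrArg Subtype.val hp⟩

end Tree

section Construction

variable {K V0 A B : Type} [Field K] [Fintype B] [LinearOrder B] {R : Rep K V0 A B}
  {S0 : Set V0} {S1 : Set A} {β : Finset B}

theorem exists_cell_family_of_mem_cellOn (hsub : ∀ a ∈ S1, R.src a ∈ S0 ∧ R.tgt a ∈ S0)
    {V : R.SubRepOn S0} (hV : V ∈ R.CellOn S0 S1 (β.filter fun b => R.vtx b ∈ S0)) :
    ∃ W : ∀ p, Submodule K ({b : B // R.vtx b = p} → K),
      (∀ p, IsCellSubspace (R.pivots β p) (W p)) ∧ ∀ a ∈ S1, R.IsStable W a := by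
  obtain ⟨hVsub, hVcell⟩ := (mem_cellOn_iff R S0 S1 _ V).1 hV
  refine ⟨fun p => if hp : p ∈ S0 then V ⟨p, hp⟩ else
    Submodule.span K (Set.range fun i : R.pivots β p => Pi.single (i : {b : B // R.vtx b = p}) 1),
    fun p => ?_, fun a ha x hx => ?_⟩
  · dsimp only
    split_ifs with hp
    · exact pivots_filter R β hp ▸ hVcell ⟨p, hp⟩
    · exact ⟨_, isEchelon_single _, rfl⟩
  · obtain ⟨hs, ht⟩ := hsub a ha
    simp only [hs, ht, dite_true] at hx ⊢
    exact hVsub a ha hs ht x hx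

variable (e : ∀ a, a ∉ S1 → ({b : B // R.vtx b = R.src a} ≃o {b : B // R.vtx b = R.tgt a}))

theorem span_single_mem_cell (hlin : R.Linear) (hS1 : ∀ a, a ∉ S1)
    (he : ∀ a ha i, R.mmap a (Pi.single i 1) = Pi.single (e a ha i) 1)
    (hcl : ∀ a ha, ∀ i ∈ R.pivots β (R.src a), e a ha i ∈ R.pivots β (R.tgt a)) :
    (fun p => Submodule.span K (Set.range fun i : R.pivots β p =>
      Pi.single (i : {b : B // R.vtx b = p}) (1 : K))) ∈ R.Cell β := by
  refine (mem_cell_iff R β _).2 ⟨fun a x hx => ?_, fun p => ⟨_, isEchelon_single _, rfl⟩⟩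
  rw [mmap_eq_comp_symm hlin (he a (hS1 a))]
  exact single_comp_symm_mem_span_single _ (hcl a (hS1 a)) hx

theorem exists_stable_cell_family (hlin : R.Linear) (hsub : ∀ a ∈ S1, R.src a ∈ S0 ∧ R.tgt a ∈ S0)
    (he : ∀ a ha i, R.mmap a (Pi.single i 1) = Pi.single (e a ha i) 1)
    (hcl : ∀ a ha, ∀ i ∈ R.pivots β (R.src a), e a ha i ∈ R.pivots β (R.tgt a))
    (par : ∀ p, p ∉ S0 → A) (hpar : ∀ p hp, par p hp ∉ S1 ∧ R.IsParentArrow S0 p (par p hp))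
    {V : R.SubRepOn S0} (hV : V ∈ R.CellOn S0 S1 (β.filter fun b => R.vtx b ∈ S0))
    (F : Finset V0) :
    ∃ W : ∀ p, Submodule K ({b : B // R.vtx b = p} → K),
      (∀ p, IsCellSubspace (R.pivots β p) (W p)) ∧ (∀ a ∈ S1, R.IsStable W a) ∧
        ∀ p ∈ F, ∀ hp : p ∉ S0, R.IsStable W (par p hp) := by
  induction F using Finset.induction_on_max_value (R.distS S0) with
  | empty =>
    obtain ⟨W, hWcell, hWS1⟩ := exists_cell_family_of_mem_cellOn hsub hV
    exact ⟨W, hWcell, hWS1, by simp⟩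
  | insert p F hpF hmax ih =>
    obtain ⟨W, hWcell, hWS1, hWF⟩ := ih
    by_cases hp : p ∈ S0
    · refine ⟨W, hWcell, hWS1, fun q hq hqS0 => ?_⟩
      rcases Finset.mem_insert.1 hq with rfl | hq
      exacts [absurd hp hqS0, hWF q hq hqS0]
    obtain ⟨hparS1, hparp⟩ := hpar p hp
    obtain ⟨U, hU, hUstable⟩ := exists_update_isStable hlin (he _ hparS1) (hcl _ hparS1) hWcell
      hparp.src_ne_tgt hparp.src_eq_or_tgt_eq
    refine ⟨Function.update W p U, fun q => ?_, fun a ha => ?_, fun q hq hqS0 => ?_⟩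
    · rcases eq_or_ne q p with rfl | hqp
      · rwa [Function.update_self]
      · rw [Function.update_of_ne hqp]
        exact hWcell q
    · exact (hWS1 a ha).update U (fun h => hp (h ▸ (hsub a ha).1)) fun h => hp (h ▸ (hsub a ha).2)
    · rcases Finset.mem_insert.1 hq with rfl | hqF
      · exact hUstable
      · have hne := (hpar q hqS0).2.src_ne_and_tgt_ne (by rintro rfl; exact hpF hqF) (hmax q hqF)
        exact (hWF q hqF hqS0).update U hne.1 hne.2

theorem nonempty_cell_of_mem_cellOn [Fintype V0] [Fintype A] (hlin : R.Linear)
    (hsub : ∀ a ∈ S1, R.src a ∈ S0 ∧ R.tgt a ∈ S0) (htree : IsTreeExtension R.src R.tgt S0 S1)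
    (he : ∀ a ha i, R.mmap a (Pi.single i 1) = Pi.single (e a ha i) 1)
    (hcl : ∀ a ha, ∀ i ∈ R.pivots β (R.src a), e a ha i ∈ R.pivots β (R.tgt a))
    {V : R.SubRepOn S0} (hV : V ∈ R.CellOn S0 S1 (β.filter fun b => R.vtx b ∈ S0)) :
    (R.Cell β).Nonempty := by
  rcases S0.eq_empty_or_nonempty with rfl | ⟨s0, hs0⟩
  · exact ⟨_, span_single_mem_cell e hlin (fun a ha => (hsub a ha).1) he hcl⟩
  choose par hpar using fun p (hp : p ∉ S0) => exists_isParentArrow hsub htree hs0 hp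
  obtain ⟨W, hWcell, hWS1, hWpar⟩ :=
    exists_stable_cell_family e hlin hsub he hcl par hpar hV Finset.univ
  refine ⟨W, (mem_cell_iff R β W).2 ⟨fun a => ?_, hWcell⟩⟩
  by_cases ha : a ∈ S1
  · exact hWS1 a ha
  · obtain ⟨p, hp, rfl⟩ := exists_eq_parent htree hs0 par hpar ha
    exact hWpar p (Finset.mem_univ p) hp

end Construction

end Rep

end QGr

open QGr in
/-- Let `T` be a tree extension of the subquiver `S = (S0, S1)`, `M` a
representation of `T` with ordered basis `B` ordered above `S`, and `β ⊆ B` with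
`β_S = β ∩ B_S`.  Then `C_β^M` is empty if and only if `C_{β_S}^{M_S}` is empty or there is
an arrow `α : p → q` of `T − S` such that `M_α(β_p) ⊄ β_q`. -/
theorem schubert_cell_empty_iff_tree_extension
    {K V0 A B : Type} [Field K] [Fintype V0] [Fintype A] [Fintype B] [LinearOrder B]
    (R : Rep K V0 A B) (hlin : R.Linear)
    (S0 : Set V0) (S1 : Set A)
    (hsub : ∀ a ∈ S1, R.src a ∈ S0 ∧ R.tgt a ∈ S0)
    (htree : IsTreeExtension R.src R.tgt S0 S1)
    (hord : R.OrderedAbove S0 S1)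
    (β : Finset B) :
    R.Cell β = ∅ ↔
      (R.CellOn S0 S1 (β.filter fun b => R.vtx b ∈ S0) = ∅ ∨
        ∃ a : A, a ∉ S1 ∧ ∃ b0 ∈ β, R.vtx b0 = R.src a ∧
          ¬ ∃ b1 ∈ β, R.MapsBasisTo a b0 b1) := by
  choose e he using hord.2.2.2
  rw [← not_iff_not]
  push Not
  rw [forall₂_congr fun a ha => Rep.forall_exists_mapsBasisTo_iff hlin (he a ha)]
  constructor
  · rintro ⟨W, hW⟩
    exact ⟨⟨_, Rep.resOn_mem_cellOn hW⟩,
      fun a ha i hi => Rep.mem_pivots_of_mem_cell hlin (he a ha) hW hi⟩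
  · rintro ⟨⟨V, hV⟩, hcl⟩
    exact Rep.nonempty_cell_of_mem_cellOn e hlin hsub htree he hcl hV
end
end

section
/- Let F : T → Q be a morphism of quivers and M a representation of T over a field K with ordered basis B. Then: (a) for every subrepresentation V of M, the family F_*V with (F_*V)_q = ⊕_{p ∈ F⁻¹(q)} V_p is a subrepresentation of F_*M; (b) for every dimension vector e of T, the map ι : Gr_e(M) → Gr_{F(e)}(F_*M), V ↦ F_*V, is injective, where F(e)_q = Σ_{p∈F⁻¹(q)} e_p; (c) for every subset β ⊆ B of type e, ι maps the Schubert cell C_β^M into the Schubert cell C_β^{F_*M}. -/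
open scoped Classical

noncomputable section

/-!
`F_*V` at a vertex `q` is the product of the `V_p` over the fibre `Fv p = q`, so its dimension is
the sum of theirs. A vector of `M_p`, extended by zero to `(F_*M)_q`, lies in `F_*V` iff it lies
in `V_p`; this recovers `V` from `F_*V`, and shows `F_*V` is spanned by the extensions by zero of
spanning sets of the `V_p`. Each structure map of `F_*M` is a sum of extensions by zero of images
under the maps `M_α`, whence `F_*V` is a subrepresentation; extending the Schubert-cell generators
of the `V_p` by zero gives Schubert-cell generators of `F_*V`.
-/

theorem Finset.card_filter_comp_eq_sum_card_fiber {ι V W : Type*} [Fintype V]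
    (s : Finset ι) (f : ι → V) (g : V → W) (w : W) :
    (s.filter fun i => g (f i) = w).card =
      ∑ v ∈ Finset.univ.filter (fun v => g v = w), (s.filter fun i => f i = v).card := by
  rw [Finset.card_eq_sum_card_fiberwise (f := f) (t := Finset.univ.filter fun v => g v = w)
    fun i hi => by simpa using (Finset.mem_filter.1 hi).2]
  refine Finset.sum_congr rfl fun v hv => ?_
  rw [Finset.filter_filter]
  refine congrArg _ (Finset.filter_congr fun i _ => ?_)
  simp only [Finset.mem_filter, Finset.mem_univ, true_and] at hv
  exact ⟨And.right, fun h => ⟨h ▸ hv, h⟩⟩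

namespace QGr.Rep

variable {K : Type} [Field K] {V0 A B QV QA : Type} {R : Rep K V0 A B} {Fv : V0 → QV}

variable (R Fv) in
def restrictTo {p : V0} {q : QV} (hq : Fv p = q) :
    ({b : B // Fv (R.vtx b) = q} → K) →ₗ[K] ({b : B // R.vtx b = p} → K) where
  toFun x b := x ⟨b.val, by rw [b.prop]; exact hq⟩
  map_add' _ _ := rfl
  map_smul' _ _ := rfl

variable (R Fv) in
def extendByZero (p : V0) (q : QV) :
    ({b : B // R.vtx b = p} → K) →ₗ[K] ({b : B // Fv (R.vtx b) = q} → K) where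
  toFun x b := if h : R.vtx b.val = p then x ⟨b.val, h⟩ else 0
  map_add' x y := by
    ext b
    by_cases h : R.vtx b.val = p <;> simp [h]
  map_smul' c x := by
    ext b
    by_cases h : R.vtx b.val = p <;> simp [h]

theorem mem_pushSub {W : R.SubRep} {q : QV} {x : {b : B // Fv (R.vtx b) = q} → K} :
    x ∈ R.pushSub Fv W q ↔ ∀ (p : V0) (hq : Fv p = q), R.restrictTo Fv hq x ∈ W p :=
  Iff.rfl

theorem restrictTo_extendByZero_self {p : V0} {q : QV} (hq : Fv p = q)
    (x : {b : B // R.vtx b = p} → K) :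
    R.restrictTo Fv hq (R.extendByZero Fv p q x) = x := by
  ext b
  exact dif_pos b.prop

theorem restrictTo_extendByZero_of_ne {p p' : V0} {q : QV} (hp' : Fv p' = q) (hne : p' ≠ p)
    (x : {b : B // R.vtx b = p} → K) :
    R.restrictTo Fv hp' (R.extendByZero Fv p q x) = 0 := by
  ext b
  exact dif_neg (b.prop.symm ▸ hne)

theorem sum_extendByZero_restrictTo [Fintype V0] {q : QV} (x : {b : B // Fv (R.vtx b) = q} → K) :
    ∑ p : {p : V0 // Fv p = q}, R.extendByZero Fv p q (R.restrictTo Fv p.2 x) = x := by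
  ext b
  rw [Finset.sum_apply, Finset.sum_eq_single ⟨R.vtx b.val, b.prop⟩]
  · exact dif_pos rfl
  · exact fun p _ hp => dif_neg fun h => hp (Subtype.ext h.symm)
  · exact fun h => absurd (Finset.mem_univ _) h

theorem extendByZero_mem_pushSub_iff {W : R.SubRep} {p : V0} {q : QV} (hq : Fv p = q)
    {x : {b : B // R.vtx b = p} → K} :
    R.extendByZero Fv p q x ∈ R.pushSub Fv W q ↔ x ∈ W p := by
  refine mem_pushSub.trans
    ⟨fun h => restrictTo_extendByZero_self hq x ▸ h p hq, fun hx p' hp' => ?_⟩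
  by_cases hne : p' = p
  · subst hne
    rwa [restrictTo_extendByZero_self]
  · rw [restrictTo_extendByZero_of_ne hp' hne]
    exact zero_mem _

theorem pushSub_injective : Function.Injective (R.pushSub Fv) := by
  intro U U' h
  funext p
  ext x
  rw [← extendByZero_mem_pushSub_iff (rfl : Fv p = Fv p), h, extendByZero_mem_pushSub_iff rfl]

theorem pushSub_eq_iSup_map [Fintype V0] (W : R.SubRep) (q : QV) :
    R.pushSub Fv W q = ⨆ p : {p : V0 // Fv p = q}, (W p).map (R.extendByZero Fv p q) := by
  refine le_antisymm (fun x hx => ?_) (iSup_le fun p => ?_)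
  · rw [← sum_extendByZero_restrictTo x]
    exact Submodule.sum_mem _ fun p _ =>
      Submodule.mem_iSup_of_mem p (Submodule.mem_map_of_mem (hx p p.2))
  · exact Submodule.map_le_iff_le_comap.2 fun x hx => (extendByZero_mem_pushSub_iff p.2).2 hx

variable (R Fv) in
def pushSubEquivPi [Fintype V0] (W : R.SubRep) (q : QV) :
    R.pushSub Fv W q ≃ₗ[K] ∀ p : {p : V0 // Fv p = q}, W p where
  toFun x p := ⟨R.restrictTo Fv p.2 x, x.2 p p.2⟩
  map_add' _ _ := rfl
  map_smul' _ _ := rfl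
  invFun y := ⟨∑ p : {p : V0 // Fv p = q}, R.extendByZero Fv p q (y p),
    Submodule.sum_mem _ fun p _ => (extendByZero_mem_pushSub_iff p.2).2 (y p).2⟩
  left_inv x := Subtype.ext (sum_extendByZero_restrictTo x.1)
  right_inv y := by
    funext p
    refine Subtype.ext ((map_sum _ _ _).trans ((Finset.sum_eq_single p ?_ ?_).trans ?_))
    · exact fun p' _ hne => restrictTo_extendByZero_of_ne p.2 (fun h => hne (Subtype.ext h).symm) _
    · exact fun h => absurd (Finset.mem_univ _) h
    · exact restrictTo_extendByZero_self p.2 _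

theorem finrank_pushSub [Fintype V0] [Fintype B] (W : R.SubRep) (q : QV) :
    Module.finrank K (R.pushSub Fv W q) =
      ∑ p ∈ Finset.univ.filter (fun p : V0 => Fv p = q), Module.finrank K (W p) := by
  rw [(R.pushSubEquivPi Fv W q).finrank_eq, Module.finrank_pi_fintype]
  exact (Finset.sum_subtype _ (fun p => by simp) fun p => Module.finrank K (W p)).symm

section push

variable [Fintype A] {qsrc qtgt : QA → QV} {Fa : A → QA}
  (hFs : ∀ a : A, Fv (R.src a) = qsrc (Fa a))

theorem pushMap_eq_sum (aq : QA) (x : {b : B // Fv (R.vtx b) = qsrc aq} → K) :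
    R.pushMap qsrc qtgt Fv Fa hFs aq x = ∑ α : A, if hα : Fa α = aq then
      R.extendByZero Fv (R.tgt α) (qtgt aq)
        (R.mmap α (R.restrictTo Fv ((hFs α).trans (congrArg qsrc hα)) x)) else 0 := by
  ext c
  rw [Finset.sum_apply]
  refine Finset.sum_congr rfl fun α _ => ?_
  by_cases hα : Fa α = aq
  · simp only [dif_pos hα]
    rfl
  · simp only [dif_neg hα]
    rfl

theorem pushSub_isSubrep {W : R.SubRep} (hW : R.IsSubrep W) :
    (R.push qsrc qtgt Fv Fa hFs).IsSubrep (R.pushSub Fv W) := by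
  intro aq (x : {b : B // Fv (R.vtx b) = qsrc aq} → K) hx
  refine mem_pushSub.2 fun p (hp : Fv p = qtgt aq) => ?_
  change R.restrictTo Fv hp (R.pushMap qsrc qtgt Fv Fa hFs aq x) ∈ W p
  rw [pushMap_eq_sum, map_sum]
  refine Submodule.sum_mem _ fun α _ => ?_
  by_cases hα : Fa α = aq
  · rw [dif_pos hα]
    by_cases hαp : R.tgt α = p
    · subst hαp
      rw [restrictTo_extendByZero_self]
      exact hW α _ (hx (R.src α) ((hFs α).trans (congrArg qsrc hα)))
    · rw [restrictTo_extendByZero_of_ne hp (Ne.symm hαp)]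
      exact zero_mem _
  · rw [dif_neg hα, map_zero]
    exact zero_mem _

theorem pushSub_mem_gr [Fintype V0] [Fintype B] {e : V0 → ℕ} {W : R.SubRep}
    (hW : W ∈ R.Gr e) :
    R.pushSub Fv W ∈ (R.push qsrc qtgt Fv Fa hFs).Gr
      (fun q => ∑ p ∈ Finset.univ.filter (fun p : V0 => Fv p = q), e p) :=
  ⟨pushSub_isSubrep hFs hW.1,
    fun q => (finrank_pushSub W q).trans (Finset.sum_congr rfl fun p _ => hW.2 p)⟩

variable [LinearOrder B]

theorem inCell_pushSub [Fintype V0] {β : Finset B} {W : R.SubRep} (hW : R.InCell β W) :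
    (R.push qsrc qtgt Fv Fa hFs).InCell β (R.pushSub Fv W) := by
  intro q
  choose v hv_one hv_zero hv_span using hW
  refine ⟨fun b0 => R.extendByZero Fv (R.vtx b0.1) q (v _ ⟨b0.1, b0.2.1, rfl⟩),
    fun b0 => (dif_pos rfl).trans (hv_one _ _), fun b0 b1 hne hlt => ?_, ?_⟩
  · by_cases h : R.vtx b1.1 = R.vtx b0.1
    · exact (dif_pos h).trans (hv_zero _ _ ⟨b1.1, h⟩ hne hlt)
    · exact dif_neg h
  · simp_rw [pushSub_eq_iSup_map, hv_span, Submodule.map_span, ← Submodule.span_iUnion]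
    congr 1
    ext y
    simp only [Set.mem_iUnion, Set.mem_image, Set.mem_range]
    constructor
    · rintro ⟨p, _, ⟨⟨b, hb, hbp⟩, rfl⟩, rfl⟩
      obtain ⟨p, hp⟩ := p
      dsimp only at hbp ⊢
      subst hbp
      exact ⟨⟨b, hb, hp⟩, rfl⟩
    · rintro ⟨b0, rfl⟩
      exact ⟨⟨R.vtx b0.1, b0.2.2⟩, _, ⟨⟨b0.1, b0.2.1, rfl⟩, rfl⟩, rfl⟩

theorem pushSub_mem_cell [Fintype V0] [Fintype B] {β : Finset B} {W : R.SubRep}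
    (hW : W ∈ R.Cell β) : R.pushSub Fv W ∈ (R.push qsrc qtgt Fv Fa hFs).Cell β := by
  obtain ⟨hsub, hdim, hcell⟩ := hW
  obtain ⟨hsub', hdim'⟩ := pushSub_mem_gr hFs (e := fun p => (β.filter (R.vtx · = p)).card)
    ⟨hsub, hdim⟩
  exact ⟨hsub', fun q => (hdim' q).trans
    (β.card_filter_comp_eq_sum_card_fiber R.vtx Fv q).symm, inCell_pushSub hFs hcell⟩

end push

end QGr.Rep

open QGr in
theorem pushforward_subrepresentations_general
    {K V0 A B QV QA : Type} [Field K] [Fintype V0] [Fintype A] [Fintype B]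
    [LinearOrder B]
    (R : Rep K V0 A B)
    (qsrc qtgt : QA → QV) (Fv : V0 → QV) (Fa : A → QA)
    (hFs : ∀ a : A, Fv (R.src a) = qsrc (Fa a)) :
    (∀ W : R.SubRep, R.IsSubrep W →
      (R.push qsrc qtgt Fv Fa hFs).IsSubrep (R.pushSub Fv W)) ∧
    (∀ e : V0 → ℕ, ∀ W ∈ R.Gr e,
      R.pushSub Fv W ∈ (R.push qsrc qtgt Fv Fa hFs).Gr
        (fun q => ∑ p ∈ Finset.univ.filter (fun p : V0 => Fv p = q), e p)) ∧
    (∀ e : V0 → ℕ, ∀ W W' : R.SubRep, W ∈ R.Gr e → W' ∈ R.Gr e →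
      R.pushSub Fv W = R.pushSub Fv W' → W = W') ∧
    (∀ β : Finset B, ∀ W ∈ R.Cell β,
      R.pushSub Fv W ∈ (R.push qsrc qtgt Fv Fa hFs).Cell β) :=
  ⟨fun _ hW => Rep.pushSub_isSubrep hFs hW, fun _ _ hW => Rep.pushSub_mem_gr hFs hW,
    fun _ _ _ _ _ h => Rep.pushSub_injective h, fun _ _ hW => Rep.pushSub_mem_cell hFs hW⟩

open QGr in
/-- Let `F : T → Q` be a morphism of quivers and `M` a representation of `T`
with ordered basis `B`.  Then (a) the push-forward `F_*V` of a subrepresentation `V` of `M`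
is a subrepresentation of `F_*M`; (b) `V ↦ F_*V` is injective on `Gr_e(M)` and maps it into
`Gr_{F(e)}(F_*M)`; (c) it maps the Schubert cell `C_β^M` into `C_β^{F_*M}`. -/
theorem pushforward_subrepresentations
    {K V0 A B QV QA : Type} [Field K] [Fintype V0] [Fintype A] [Fintype B]
    [Fintype QV] [Fintype QA] [LinearOrder B]
    (R : Rep K V0 A B) (hlin : R.Linear)
    (qsrc qtgt : QA → QV) (Fv : V0 → QV) (Fa : A → QA)
    (hFs : ∀ a : A, Fv (R.src a) = qsrc (Fa a))
    (hFt : ∀ a : A, Fv (R.tgt a) = qtgt (Fa a)) :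
    (∀ W : R.SubRep, R.IsSubrep W →
      (R.push qsrc qtgt Fv Fa hFs).IsSubrep (R.pushSub Fv W)) ∧
    (∀ e : V0 → ℕ, ∀ W ∈ R.Gr e,
      R.pushSub Fv W ∈ (R.push qsrc qtgt Fv Fa hFs).Gr
        (fun q => ∑ p ∈ Finset.univ.filter (fun p : V0 => Fv p = q), e p)) ∧
    (∀ e : V0 → ℕ, ∀ W W' : R.SubRep, W ∈ R.Gr e → W' ∈ R.Gr e →
      R.pushSub Fv W = R.pushSub Fv W' → W = W') ∧
    (∀ β : Finset B, ∀ W ∈ R.Cell β,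
      R.pushSub Fv W ∈ (R.push qsrc qtgt Fv Fa hFs).Cell β) :=
  pushforward_subrepresentations_general R qsrc qtgt Fv Fa hFs
end
end

section
/- Let F : T → Q be a winding of quivers and M a representation of T over a field K with ordered basis B inducing an ordering of T, and suppose F is strictly ordered with respect to B. Let β ⊆ B. For W ∈ C_β^{F_*M}, each subspace W_q (q a vertex of Q) has a unique spanning family (w_b)_{b ∈ β ∩ B_q} with w_b = b + Σ μ_{b',b} b', the sum over b' ∈ B_q ∖ β with b' < b. For each vertex p of T and b ∈ β_p, let v_b ∈ M_p be the component of w_b in the direct summand M_p of (F_*M)_{F(p)}, and set V_p = span{v_b : b ∈ β_p}. Then V = (V_p)_{p∈T0} is a subrepresentation of M lying in the Schubert cell C_β^M; the resulting map π : C_β^{F_*M} → C_β^M is a retraction of the injection ι : C_β^M → C_β^{F_*M}, V ↦ F_*V, i.e. π(ι(V)) = V for all V ∈ C_β^M. -/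
open scoped Classical

noncomputable section

namespace QGr

/-- An echelon family of generating vectors with pivots `β`, for a point of a Schubert cell
of the push-forward representation: `w b' = b' + Σ μ_{b,b'} b`, the sum over basis elements
`b < b'` (in the same fibre over `Q`) with `b ∉ β`. -/
def EchelonFam {K V0 A B QV : Type} [Field K] [LinearOrder B]
    (R : Rep K V0 A B) (Fv : V0 → QV) (β : Finset B)
    (w : ∀ b' : {c : B // c ∈ β}, {b : B // Fv (R.vtx b) = Fv (R.vtx b'.val)} → K) : Prop :=
  (∀ b' : {c : B // c ∈ β}, w b' ⟨b'.val, rfl⟩ = 1) ∧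
  (∀ (b' : {c : B // c ∈ β}) (b : {b : B // Fv (R.vtx b) = Fv (R.vtx b'.val)}),
    b.val ∈ β → b.val ≠ b'.val → w b' b = 0) ∧
  (∀ (b' : {c : B // c ∈ β}) (b : {b : B // Fv (R.vtx b) = Fv (R.vtx b'.val)}),
    b'.val < b.val → w b' b = 0)

/-- The family `w` spans the collection of subspaces `W` over the vertices of `Q`. -/
def SpansQ {K V0 A B QV : Type} [Field K] [LinearOrder B]
    (R : Rep K V0 A B) (Fv : V0 → QV) (β : Finset B)
    (w : ∀ b' : {c : B // c ∈ β}, {b : B // Fv (R.vtx b) = Fv (R.vtx b'.val)} → K)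
    (W : ∀ q : QV, Submodule K ({b : B // Fv (R.vtx b) = q} → K)) : Prop :=
  ∀ q : QV, W q = Submodule.span K (Set.range
    (fun b' : {c : B // c ∈ β ∧ Fv (R.vtx c) = q} =>
      fun b : {b : B // Fv (R.vtx b) = q} =>
        w ⟨b'.val, b'.prop.1⟩ ⟨b.val, b.prop.trans b'.prop.2.symm⟩))

/-- The collection of subspaces of `M` obtained from the diagonal components of the echelon
family `w`: `V_p` is spanned by the components in `M_p` of the vectors `w b'` with
`b' ∈ β ∩ B_p`. -/
def extractDiag {K V0 A B QV : Type} [Field K] [LinearOrder B]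
    (R : Rep K V0 A B) (Fv : V0 → QV) (β : Finset B)
    (w : ∀ b' : {c : B // c ∈ β}, {b : B // Fv (R.vtx b) = Fv (R.vtx b'.val)} → K) :
    R.SubRep :=
  fun p => Submodule.span K (Set.range
    (fun b' : {c : B // c ∈ β ∧ R.vtx c = p} =>
      fun b : {b : B // R.vtx b = p} =>
        w ⟨b'.val, b'.prop.1⟩ ⟨b.val, congrArg Fv (b.prop.trans b'.prop.2.symm)⟩))

end QGr

/-! The echelon family of a point `W` of `C_β^{F_*M}` exists by the cell condition and is unique
because its pivot coordinates form an identity matrix; its components `v_b` inherit the echelon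
shape, which gives the dimension and cell conditions for `V`. For an arrow `a : p → p'` and
`b ∈ β_p`, expand `(F_*M)_{F a} w_b = Σ_j c_j w_j`. Strict ordering makes `a` the only lift of
`F a` ending at `p'`, so `M_a v_b` is the `M_{p'}`-component of this sum. There a `w_j` with `j`
below `p'` vanishes, and for `j` above `p'` the coefficient `c_j` vanishes: any other lift of
`F a` ending at the vertex of `j` starts above `p`, where `w_b` is zero. Finally, if `W = F_*V`
then all `v_b` lie in `V_p`, and the dimensions agree. -/

namespace QGr

section Pivot

variable {K ι γ : Type} [Field K] [Fintype ι] [DecidableEq ι] {f : ι → γ → K}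
  {pv : ι → γ}

theorem sum_pivot_smul_eq_of_mem_span (hf : ∀ i j, f i (pv j) = if j = i then 1 else 0)
    {x : γ → K} (hx : x ∈ Submodule.span K (Set.range f)) : ∑ i, x (pv i) • f i = x := by
  obtain ⟨c, rfl⟩ := (Submodule.mem_span_range_iff_exists_fun K).mp hx
  refine Finset.sum_congr rfl fun i _ => ?_
  simp [Finset.sum_apply, hf]

theorem finrank_span_eq_card_of_pivot (hf : ∀ i j, f i (pv j) = if j = i then 1 else 0) :
    Module.finrank K (Submodule.span K (Set.range f)) = Fintype.card ι := by
  refine finrank_span_eq_card (Fintype.linearIndependent_iff.mpr fun g hg i => ?_)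
  simpa [Finset.sum_apply, hf] using congrFun hg (pv i)

end Pivot

namespace Rep

variable {K V0 A B QV QA : Type} [Field K]

def component (R : Rep K V0 A B) (Fv : V0 → QV) (p : V0) {q : QV} (hq : Fv p = q) :
    ({b : B // Fv (R.vtx b) = q} → K) →ₗ[K] ({b : B // R.vtx b = p} → K) :=
  LinearMap.funLeft K K fun b => ⟨b.val, by rw [b.prop]; exact hq⟩

theorem vtx_ne_of_vlt [Preorder B] {R : Rep K V0 A B} {p q : V0} (h : R.vlt p q) {b : B}
    (hb : R.vtx b = p) : R.vtx b ≠ q :=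
  fun hb' => lt_irrefl b (h b b hb hb')

variable [LinearOrder B] [Fintype A] {R : Rep K V0 A B} {qsrc qtgt : QA → QV} {Fv : V0 → QV}
  {Fa : A → QA}

theorem StrictlyOrdered.component_pushMap (hso : R.StrictlyOrdered Fa)
    (hFs : ∀ a, Fv (R.src a) = qsrc (Fa a)) (hFt : ∀ a, Fv (R.tgt a) = qtgt (Fa a)) (a : A)
    (x : {b : B // Fv (R.vtx b) = qsrc (Fa a)} → K) :
    R.component Fv (R.tgt a) (hFt a) (R.pushMap qsrc qtgt Fv Fa hFs (Fa a) x) =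
      R.mmap a (R.component Fv (R.src a) (hFs a) x) := by
  funext b
  refine (Finset.sum_eq_single a (fun α _ hαa => ?_) (by simp)).trans ?_
  · by_cases hα : Fa α = Fa a
    · rw [dif_pos hα, dif_neg]
      intro hb
      rcases hso α a hαa hα with ⟨-, h⟩ | ⟨-, h⟩
      · exact vtx_ne_of_vlt h hb b.prop
      · exact vtx_ne_of_vlt h b.prop hb
    · rw [dif_neg hα]
  · rw [dif_pos rfl, dif_pos b.prop]
    rfl

theorem StrictlyOrdered.pushMap_apply_eq_zero (hso : R.StrictlyOrdered Fa) (hlin : R.Linear)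
    (hFs : ∀ a, Fv (R.src a) = qsrc (Fa a)) {a : A} {i : B} (hi : R.vtx i = R.src a)
    {x : {b : B // Fv (R.vtx b) = qsrc (Fa a)} → K} (hx : ∀ c, i < c.val → x c = 0)
    {b : B} (hb : R.vtx b = R.tgt a) (j : {b : B // Fv (R.vtx b) = qtgt (Fa a)})
    (hj : R.vtx j.val ≠ R.tgt a) (hbj : b < j.val) :
    R.pushMap qsrc qtgt Fv Fa hFs (Fa a) x j = 0 := by
  refine Finset.sum_eq_zero fun α _ => ?_
  split_ifs with hα hjα
  · rcases hso a α (by rintro rfl; exact hj hjα) hα.symm with ⟨hs, -⟩ | ⟨-, ht⟩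
    · convert congrFun (hlin α).map_zero ⟨j.val, hjα⟩ using 2
      · exact funext fun c => hx _ (hs i c hi c.prop)
      · rfl
    · exact absurd (ht j.val b hjα hb) (not_lt.mpr hbj.le)
  all_goals rfl

end Rep

section Echelon

variable {K V0 A B QV QA : Type} [Field K] [LinearOrder B] {R : Rep K V0 A B} {Fv : V0 → QV}
  {β : Finset B}
  {w : ∀ b' : {c : B // c ∈ β}, {b : B // Fv (R.vtx b) = Fv (R.vtx b'.val)} → K}

variable (R Fv β w) in
def echelonVec (q : QV) :
    {c : B // c ∈ β ∧ Fv (R.vtx c) = q} → {b : B // Fv (R.vtx b) = q} → K :=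
  fun b' b => w ⟨b'.val, b'.prop.1⟩ ⟨b.val, b.prop.trans b'.prop.2.symm⟩

variable (R Fv β w) in
def diagVec (p : V0) : {c : B // c ∈ β ∧ R.vtx c = p} → {b : B // R.vtx b = p} → K :=
  fun b' b => w ⟨b'.val, b'.prop.1⟩ ⟨b.val, congrArg Fv (b.prop.trans b'.prop.2.symm)⟩

theorem extractDiag_apply (p : V0) :
    extractDiag R Fv β w p = Submodule.span K (Set.range (diagVec R Fv β w p)) :=
  rfl

theorem SpansQ.eq_span {W : ∀ q : QV, Submodule K ({b : B // Fv (R.vtx b) = q} → K)}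
    (hs : SpansQ R Fv β w W) (q : QV) :
    W q = Submodule.span K (Set.range (echelonVec R Fv β w q)) :=
  hs q

theorem SpansQ.echelonVec_mem {W : ∀ q : QV, Submodule K ({b : B // Fv (R.vtx b) = q} → K)}
    (hs : SpansQ R Fv β w W) (q : QV) (i : {c : B // c ∈ β ∧ Fv (R.vtx c) = q}) :
    echelonVec R Fv β w q i ∈ W q := by
  rw [hs.eq_span]
  exact Submodule.subset_span ⟨i, rfl⟩

theorem EchelonFam.apply_of_mem (hw : EchelonFam R Fv β w) (b' : {c : B // c ∈ β}) {j : B}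
    (hj : j ∈ β) (h : Fv (R.vtx j) = Fv (R.vtx b'.val)) :
    w b' ⟨j, h⟩ = if j = b'.val then 1 else 0 := by
  split_ifs with he
  · subst he
    exact hw.1 b'
  · exact hw.2.1 b' ⟨j, h⟩ hj he

theorem EchelonFam.echelonVec_pivot (hw : EchelonFam R Fv β w) (q : QV)
    (i j : {c : B // c ∈ β ∧ Fv (R.vtx c) = q}) :
    echelonVec R Fv β w q i ⟨j.val, j.prop.2⟩ = if j = i then 1 else 0 := by
  simp [echelonVec, hw.apply_of_mem _ j.prop.1, Subtype.ext_iff]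

theorem EchelonFam.diagVec_pivot (hw : EchelonFam R Fv β w) (p : V0)
    (i j : {c : B // c ∈ β ∧ R.vtx c = p}) :
    diagVec R Fv β w p i ⟨j.val, j.prop.2⟩ = if j = i then 1 else 0 := by
  simp [diagVec, hw.apply_of_mem _ j.prop.1, Subtype.ext_iff]

theorem EchelonFam.finrank_extractDiag [Fintype B] (hw : EchelonFam R Fv β w) (p : V0) :
    Module.finrank K (extractDiag R Fv β w p) = (β.filter fun b => R.vtx b = p).card := by
  rw [extractDiag, finrank_span_eq_card_of_pivot (pv := fun j => ⟨j.val, j.prop.2⟩)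
    (hw.diagVec_pivot p), Fintype.card_subtype]
  congr 1
  ext
  simp

theorem EchelonFam.inCell_extractDiag (hw : EchelonFam R Fv β w) :
    R.InCell β (extractDiag R Fv β w) := by
  refine fun p => ⟨diagVec R Fv β w p, fun b₀ => hw.1 ⟨b₀.val, b₀.prop.1⟩,
    fun b₀ b₁ hne hnot => ?_, rfl⟩
  by_cases hb₁ : b₁.val ∈ β
  · exact hw.2.1 _ _ hb₁ hne
  · exact hw.2.2 _ _ ((lt_or_gt_of_ne hne).resolve_left fun h => hnot ⟨h, hb₁⟩)

theorem EchelonFam.eq_of_spansQ [Fintype B]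
    {w' : ∀ b' : {c : B // c ∈ β}, {b : B // Fv (R.vtx b) = Fv (R.vtx b'.val)} → K}
    {W : ∀ q : QV, Submodule K ({b : B // Fv (R.vtx b) = q} → K)}
    (hw : EchelonFam R Fv β w) (hw' : EchelonFam R Fv β w')
    (hs : SpansQ R Fv β w W) (hs' : SpansQ R Fv β w' W) : w = w' := by
  funext b'
  let i₀ : {c : B // c ∈ β ∧ Fv (R.vtx c) = Fv (R.vtx b'.val)} := ⟨b'.val, b'.prop, rfl⟩
  have hmem :
      echelonVec R Fv β w' _ i₀ ∈ Submodule.span K (Set.range (echelonVec R Fv β w _)) :=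
    hs.eq_span _ ▸ hs'.echelonVec_mem _ i₀
  have h := sum_pivot_smul_eq_of_mem_span (hw.echelonVec_pivot _) hmem
  simp only [hw'.echelonVec_pivot, ite_smul, one_smul, zero_smul, Finset.sum_ite_eq',
    Finset.mem_univ, if_true] at h
  exact h

theorem EchelonFam.extractDiag_eq_of_spansQ_pushSub [Fintype B] {V : R.SubRep}
    (hV : ∀ p, Module.finrank K (V p) = (β.filter fun b => R.vtx b = p).card)
    (hw : EchelonFam R Fv β w) (hs : SpansQ R Fv β w (R.pushSub Fv V)) :
    extractDiag R Fv β w = V := by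
  funext p
  refine Submodule.eq_of_le_of_finrank_le
    (Submodule.span_le.mpr (Set.range_subset_iff.mpr fun i => ?_))
    (by rw [hV, hw.finrank_extractDiag])
  exact hs.echelonVec_mem _ ⟨i.val, i.prop.1, rfl⟩ p (congrArg Fv i.prop.2).symm

theorem exists_echelonFam_of_inCell [Fintype A] {qsrc qtgt : QA → QV} {Fa : A → QA}
    {hFs : ∀ a, Fv (R.src a) = qsrc (Fa a)} {W : (R.push qsrc qtgt Fv Fa hFs).SubRep}
    (h : (R.push qsrc qtgt Fv Fa hFs).InCell β W) :
    ∃ w, EchelonFam R Fv β w ∧ SpansQ R Fv β w W := by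
  choose v hv_pivot hv_zero hv_span using h
  refine ⟨fun b' => v _ ⟨b'.val, b'.prop, rfl⟩,
    ⟨fun b' => hv_pivot _ _, fun b' b hb hne => hv_zero _ _ b hne fun h => h.2 hb,
      fun b' b hlt => hv_zero _ _ b hlt.ne' fun h => lt_asymm hlt h.1⟩, fun q => ?_⟩
  rw [hv_span q]
  congr
  funext ⟨c, hc, hcq⟩
  subst hcq
  rfl

theorem EchelonFam.isSubrep_extractDiag [Fintype A] [Fintype B] {qsrc qtgt : QA → QV}
    {Fa : A → QA} (hlin : R.Linear) (hso : R.StrictlyOrdered Fa)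
    (hFs : ∀ a, Fv (R.src a) = qsrc (Fa a)) (hFt : ∀ a, Fv (R.tgt a) = qtgt (Fa a))
    {W : (R.push qsrc qtgt Fv Fa hFs).SubRep} (hW : (R.push qsrc qtgt Fv Fa hFs).IsSubrep W)
    (hw : EchelonFam R Fv β w) (hs : SpansQ R Fv β w W) :
    R.IsSubrep (extractDiag R Fv β w) := by
  intro a
  suffices h : ∀ i, R.mmap a (diagVec R Fv β w (R.src a) i) ∈ extractDiag R Fv β w (R.tgt a)
    from
    fun x hx => (Submodule.span_le (p := (extractDiag R Fv β w (R.tgt a)).comap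
      (IsLinearMap.mk' _ (hlin a)))).mpr (Set.range_subset_iff.mpr h) hx
  intro i
  let x := echelonVec R Fv β w _ ⟨i.val, i.prop.1, (congrArg Fv i.prop.2).trans (hFs a)⟩
  have hu : R.pushMap qsrc qtgt Fv Fa hFs (Fa a) x ∈ W (qtgt (Fa a)) :=
    hW (Fa a) x (hs.echelonVec_mem _ _)
  rw [hs.eq_span] at hu
  have hdiag : R.mmap a (diagVec R Fv β w (R.src a) i) =
      R.component Fv (R.tgt a) (hFt a) (R.pushMap qsrc qtgt Fv Fa hFs (Fa a) x) :=
    (hso.component_pushMap hFs hFt a x).symm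
  rw [extractDiag_apply, hdiag, ← sum_pivot_smul_eq_of_mem_span (hw.echelonVec_pivot _) hu,
    map_sum]
  refine Submodule.sum_mem _ fun j _ => ?_
  rw [map_smul]
  by_cases hj : R.vtx j.val = R.tgt a
  · exact Submodule.smul_mem _ _ (Submodule.subset_span ⟨⟨j.val, j.prop.1, hj⟩, rfl⟩)
  · convert Submodule.zero_mem _
    funext b
    rcases lt_or_gt_of_ne (show b.val ≠ j.val from fun h => hj (h ▸ b.prop)) with hbj | hjb
    · rw [Pi.smul_apply, hso.pushMap_apply_eq_zero hlin hFs i.prop.2 (x := x)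
        (fun c hc => hw.2.2 _ _ hc) b.prop _ hj hbj, zero_smul]
      rfl
    · exact mul_eq_zero_of_right _ (hw.2.2 ⟨j.val, j.prop.1⟩ ⟨b.val, _⟩ hjb)

end Echelon

end QGr

open QGr in
theorem pushforward_cell_retraction_general
    {K V0 A B QV QA : Type} [Field K] [Fintype A] [Fintype B]
    [LinearOrder B]
    (R : Rep K V0 A B) (hlin : R.Linear)
    (qsrc qtgt : QA → QV) (Fv : V0 → QV) (Fa : A → QA)
    (hFs : ∀ a : A, Fv (R.src a) = qsrc (Fa a))
    (hFt : ∀ a : A, Fv (R.tgt a) = qtgt (Fa a))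
    (hso : R.StrictlyOrdered Fa)
    (β : Finset B) :
    (∀ W ∈ (R.push qsrc qtgt Fv Fa hFs).Cell β,
      ∃! w : ∀ b' : {c : B // c ∈ β}, {b : B // Fv (R.vtx b) = Fv (R.vtx b'.val)} → K,
        EchelonFam R Fv β w ∧ SpansQ R Fv β w W) ∧
    (∀ W ∈ (R.push qsrc qtgt Fv Fa hFs).Cell β,
      ∀ w, EchelonFam R Fv β w → SpansQ R Fv β w W →
        extractDiag R Fv β w ∈ R.Cell β) ∧
    (∀ V ∈ R.Cell β,
      ∀ w, EchelonFam R Fv β w → SpansQ R Fv β w (R.pushSub Fv V) →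
        extractDiag R Fv β w = V) := by
  refine ⟨fun W hW => ?_, fun W hW w hw hs => ?_, fun V hV w hw hs => ?_⟩
  · obtain ⟨w, hw, hs⟩ := exists_echelonFam_of_inCell hW.2.2
    exact ⟨w, ⟨hw, hs⟩, fun w' ⟨hw', hs'⟩ => hw'.eq_of_spansQ hw hs' hs⟩
  · exact ⟨hw.isSubrep_extractDiag hlin hso hFs hFt hW.1 hs, hw.finrank_extractDiag,
      hw.inCell_extractDiag⟩
  · exact hw.extractDiag_eq_of_spansQ_pushSub hV.2.1 hs

open QGr in
/-- Let `F : T → Q` be a winding, strictly ordered with respect to the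
ordered basis `B` (which induces an ordering of `T`), and `β ⊆ B`.  Every point `W` of
`C_β^{F_*M}` has a unique echelon spanning family `w`; the collection `V` of the spans of the
diagonal components of `w` lies in `C_β^M`, and the resulting map
`π : C_β^{F_*M} → C_β^M` is a retraction of `ι : C_β^M → C_β^{F_*M}`, `V ↦ F_*V`. -/
theorem pushforward_cell_retraction
    {K V0 A B QV QA : Type} [Field K] [Fintype V0] [Fintype A] [Fintype B]
    [Fintype QV] [Fintype QA] [LinearOrder B]
    (R : Rep K V0 A B) (hlin : R.Linear)
    (qsrc qtgt : QA → QV) (Fv : V0 → QV) (Fa : A → QA)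
    (hFs : ∀ a : A, Fv (R.src a) = qsrc (Fa a))
    (hFt : ∀ a : A, Fv (R.tgt a) = qtgt (Fa a))
    (hwind : ∀ α α' : A, α ≠ α' → Fa α = Fa α' →
      R.src α ≠ R.src α' ∧ R.tgt α ≠ R.tgt α')
    (hindord : ∀ p q : V0, p ≠ q → R.vlt p q ∨ R.vlt q p)
    (hso : R.StrictlyOrdered Fa)
    (β : Finset B) :
    (∀ W ∈ (R.push qsrc qtgt Fv Fa hFs).Cell β,
      ∃! w : ∀ b' : {c : B // c ∈ β}, {b : B // Fv (R.vtx b) = Fv (R.vtx b'.val)} → K,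
        EchelonFam R Fv β w ∧ SpansQ R Fv β w W) ∧
    (∀ W ∈ (R.push qsrc qtgt Fv Fa hFs).Cell β,
      ∀ w, EchelonFam R Fv β w → SpansQ R Fv β w W →
        extractDiag R Fv β w ∈ R.Cell β) ∧
    (∀ V ∈ R.Cell β,
      ∀ w, EchelonFam R Fv β w → SpansQ R Fv β w (R.pushSub Fv V) →
        extractDiag R Fv β w = V) :=
  pushforward_cell_retraction_general R hlin qsrc qtgt Fv Fa hFs hFt hso β
end
end

section
/- Let X be a topological space, I a finite partially ordered set, and {C_i}_{i∈I} a family of pairwise disjoint subsets of X whose union is X. Assume that for all i, j ∈ I, if C_i intersects the closure of C_j nontrivially, then i ≤ j. Then there exist n ∈ ℕ and subsets I_0 ⊆ I_1 ⊆ ... ⊆ I_n = I such that for every l ∈ {0, ..., n}, the set X^(l) := ⋃_{i∈I_l} C_i is closed in X, and for every l ∈ {1, ..., n} and every i ∈ I_l ∖ I_{l−1}, the set C_i is both open and closed in the subspace X^(l) ∖ X^(l−1) (and likewise every C_i with i ∈ I_0 is open and closed in X^(0)). -/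
/-!
Grade the finite poset `I` by a strictly monotone height `h : I → ℕ` and let `I_l = {h ≤ l}`.
Each `I_l` is a lower set, and the closure of `C j` lies in the union of the `C i` with `i ≤ j`,
so every `X^(l)` is closed. The new indices `I_l ∖ I_{l-1}` all have height `l` and hence form an
antichain, so inside the stratum `X^(l) ∖ X^(l-1)` no piece meets the closure of another; a finite
cover by such pieces is a cover by clopen sets.
-/

open Set

theorem Finite.exists_strictMono_nat (α : Type*) [Preorder α] [Finite α] :
    ∃ h : α → ℕ, StrictMono h :=
  ⟨fun a => (Iio a).ncard, fun _ _ hab => Set.ncard_strictMono (Iio_ssubset_Iio hab)⟩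

theorem StrictMono.isAntichain_setOf_eq {α β : Type*} [PartialOrder α] [Preorder β]
    {h : α → β} (hh : StrictMono h) (b : β) : IsAntichain (· ≤ ·) {a | h a = b} := by
  intro a ha a' ha' hne hle
  exact (hh (lt_of_le_of_ne hle hne)).ne (ha.trans ha'.symm)

theorem isClopen_of_iUnion_eq_univ {Z ι : Type*} [TopologicalSpace Z] [Finite ι]
    (D : ι → Set Z) (hcover : ⋃ i, D i = univ)
    (hclos : ∀ i j, (D i ∩ closure (D j)).Nonempty → i = j) (i : ι) : IsClopen (D i) := by
  have hclosed : ∀ j, IsClosed (D j) := by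
    intro j
    refine closure_subset_iff_isClosed.mp fun x hx => ?_
    obtain ⟨k, hk⟩ := mem_iUnion.mp (hcover ▸ mem_univ x : x ∈ ⋃ k, D k)
    exact hclos k j ⟨x, hk, hx⟩ ▸ hk
  have hcompl : (D i)ᶜ = ⋃ j ∈ ({i}ᶜ : Set ι), D j := by
    ext x
    simp only [mem_compl_iff, mem_iUnion, mem_singleton_iff, exists_prop]
    constructor
    · intro hx
      obtain ⟨j, hj⟩ := mem_iUnion.mp (hcover ▸ mem_univ x : x ∈ ⋃ k, D k)
      exact ⟨j, fun hji => hx (hji ▸ hj), hj⟩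
    · rintro ⟨j, hji, hj⟩ hx
      exact hji (hclos i j ⟨x, hx, subset_closure hj⟩).symm
  refine ⟨hclosed i, isClosed_compl_iff.mp ?_⟩
  rw [hcompl]
  exact (toFinite _).isClosed_biUnion fun j _ => hclosed j

section OrderedDecomposition

variable {X I : Type*} [TopologicalSpace X] [PartialOrder I] [Finite I] (C : I → Set X)

theorem isClosed_biUnion_of_isLowerSet (hcover : ⋃ i, C i = univ)
    (hclos : ∀ i j, (C i ∩ closure (C j)).Nonempty → i ≤ j) {S : Set I} (hS : IsLowerSet S) :
    IsClosed (⋃ i ∈ S, C i) := by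
  refine closure_subset_iff_isClosed.mp ?_
  rw [(toFinite S).closure_biUnion]
  refine iUnion₂_subset fun j hj x hx => ?_
  obtain ⟨i, hi⟩ := mem_iUnion.mp (hcover ▸ mem_univ x : x ∈ ⋃ k, C k)
  exact mem_biUnion (hS (hclos i j ⟨x, hi, hx⟩) hj) hi

theorem isClopen_preimage_val_of_isAntichain
    (hclos : ∀ i j, (C i ∩ closure (C j)).Nonempty → i ≤ j) {T : Set I}
    (hT : IsAntichain (· ≤ ·) T) {Y : Set X} (hY : Y ⊆ ⋃ j ∈ T, C j) {i : I} (hi : i ∈ T) :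
    IsClopen (Subtype.val ⁻¹' C i : Set Y) := by
  let D : T → Set Y := fun j => Subtype.val ⁻¹' C j
  have hcover : ⋃ j, D j = univ := by
    refine eq_univ_of_forall fun y => ?_
    obtain ⟨j, hj, hy⟩ := mem_iUnion₂.mp (hY y.2)
    exact mem_iUnion.mpr ⟨⟨j, hj⟩, hy⟩
  refine isClopen_of_iUnion_eq_univ D hcover (fun j k ⟨y, hyj, hyk⟩ => ?_) ⟨i, hi⟩
  have hyk' : y.1 ∈ closure (C k) :=
    continuous_subtype_val.closure_preimage_subset (C k) hyk
  exact Subtype.ext (hT.eq j.2 k.2 (hclos j k ⟨y, hyj, hyk'⟩))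

end OrderedDecomposition

theorem filtration_of_ordered_decomposition_general
    {X : Type} [TopologicalSpace X] {I : Type} [Fintype I] [PartialOrder I]
    (C : I → Set X)
    (hcover : (⋃ i, C i) = Set.univ)
    (hclos : ∀ i j : I, (C i ∩ closure (C j)).Nonempty → i ≤ j) :
    ∃ (n : ℕ) (Is : ℕ → Set I),
      Monotone Is ∧ Is n = Set.univ ∧
      (∀ l ≤ n, IsClosed (⋃ i ∈ Is l, C i)) ∧
      (∀ i ∈ Is 0, IsClopen (Subtype.val ⁻¹' (C i) : Set (↥(⋃ j ∈ Is 0, C j)))) ∧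
      (∀ l : ℕ, 1 ≤ l → l ≤ n → ∀ i ∈ Is l \ Is (l - 1),
        IsClopen (Subtype.val ⁻¹' (C i) :
          Set (↥((⋃ j ∈ Is l, C j) \ (⋃ j ∈ Is (l - 1), C j))))) := by
  obtain ⟨h, hh⟩ := Finite.exists_strictMono_nat I
  refine ⟨Finset.univ.sup h, fun l => {i | h i ≤ l}, fun _ _ hl _ hi => le_trans hi hl,
    eq_univ_of_forall fun i => Finset.le_sup (f := h) (Finset.mem_univ i), fun l _ => ?_,
    fun i hi => ?_, fun l hl _ i hi => ?_⟩
  · exact isClosed_biUnion_of_isLowerSet C hcover hclos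
      fun _ _ hij hj => le_trans (hh.monotone hij) hj
  · refine isClopen_preimage_val_of_isAntichain C hclos ?_ subset_rfl hi
    exact (hh.isAntichain_setOf_eq 0).subset fun _ hj => Nat.le_zero.mp hj
  · refine isClopen_preimage_val_of_isAntichain C hclos ?_ ?_ hi
    · exact (hh.isAntichain_setOf_eq l).subset fun j ⟨hj, hj'⟩ => by
        simp only [mem_ofPred_eq] at hj hj' ⊢; omega
    · rintro x ⟨hx, hx'⟩
      obtain ⟨j, hj, hxj⟩ := mem_iUnion₂.mp hx
      exact mem_biUnion ⟨hj, fun hj' => hx' (mem_biUnion hj' hxj)⟩ hxj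

/-- Let `X` be a topological space, `I` a finite poset, and `C : I → Set X`
a family of pairwise disjoint subsets covering `X` such that `C i` can meet the closure of
`C j` only if `i ≤ j`.  Then there is a filtration `I₀ ⊆ I₁ ⊆ ⋯ ⊆ I_n = I` such that each
`X^(l) = ⋃_{i ∈ I_l} C i` is closed in `X`, each `C i` with `i ∈ I_l ∖ I_{l-1}` is clopen in
the subspace `X^(l) ∖ X^(l-1)`, and each `C i` with `i ∈ I₀` is clopen in `X^(0)`. -/
theorem filtration_of_ordered_decomposition
    {X : Type} [TopologicalSpace X] {I : Type} [Fintype I] [PartialOrder I]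
    (C : I → Set X)
    (hdisj : ∀ i j : I, i ≠ j → Disjoint (C i) (C j))
    (hcover : (⋃ i, C i) = Set.univ)
    (hclos : ∀ i j : I, (C i ∩ closure (C j)).Nonempty → i ≤ j) :
    ∃ (n : ℕ) (Is : ℕ → Set I),
      Monotone Is ∧ Is n = Set.univ ∧
      (∀ l ≤ n, IsClosed (⋃ i ∈ Is l, C i)) ∧
      (∀ i ∈ Is 0, IsClopen (Subtype.val ⁻¹' (C i) : Set (↥(⋃ j ∈ Is 0, C j)))) ∧
      (∀ l : ℕ, 1 ≤ l → l ≤ n → ∀ i ∈ Is l \ Is (l - 1),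
        IsClopen (Subtype.val ⁻¹' (C i) :
          Set (↥((⋃ j ∈ Is l, C j) \ (⋃ j ∈ Is (l - 1), C j))))) :=
  filtration_of_ordered_decomposition_general C hcover hclos
end
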